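/- arXiv:0705.1310 — 13 statements merged into one kernel-verified Lean document; each statement's English description precedes it below -/
import Mathlib

section
/- Assume: (i) U₁ is an open neighborhood of 0 in E₁ and B : V × U₁ → E₀ is of class C¹ (Fréchet differentiable with continuous derivative, one-sided at boundary points of the quadrant); (ii) B takes values in ι(E₁), and there exist constants 0 < ρ₀ < 1, 0 < ρ₁ < 1 and r > 0 such that ‖B(v,u) − B(v,u′)‖₀ ≤ ρ₀‖ι(u) − ι(u′)‖₀ and ‖ι⁻¹(B(v,u)) − ι⁻¹(B(v,u′))‖₁ ≤ ρ₁‖u − u′‖₁ for all v ∈ V with |v| < r and u, u′ ∈ U₁ with ‖u‖₁ < r; (iii) δ : V → U₁ is continuous as a map into E₁ with δ(0) = 0 and ι(δ(v)) = B(v, δ(v)) for all v ∈ V. Then for every v in a relatively open neighborhood of 0 in V: (a) the partial derivative D₂B(v, δ(v)) : E₁ → E₀ satisfies ‖D₂B(v, δ(v))h‖₀ ≤ ρ₀‖ι(h)‖₀ for all h ∈ E₁, hence extends uniquely to a bounded operator T(v) on E₀ of norm at most ρ₀, and L(v) := id_{E₀} − T(v) is a Banach space isomorphism of E₀; (b)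 the map v ↦ ι(δ(v)) from V into E₀ is of class C¹ near 0, with derivative δ′(v) = L(v)⁻¹ ∘ D₁B(v, δ(v)) ∈ L(ℝ^n, E₀) depending continuously on v. (Regularity of the solution germ: Theorem 2.3, stated on a fixed pair of adjacent levels.) -/
/-!
Differentiating `ι (δ v) = B (v, δ v)` formally gives `(1 - T(v)) δ'(v) = D₁B(v, δ v)`, where
`T(v)` is the extension of `D₂B(v, δ v)` from `ι(E₁)` to `E₀`: the contraction estimate in `E₀`
bounds `D₂B h` by `ρ₀ ‖ι h‖`, so `‖T(v)‖ ≤ ρ₀ < 1` and `1 - T(v)` is invertible.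
The formal computation needs justification because `δ` is only continuous into `E₁`, so the
chain rule does not apply to `B (v, δ v)`. Instead, compare `δ` with an affine map `ψ` into `E₁`
whose image under `ι` has derivative close to `δ'(v)` (possible because `ℝⁿ` is
finite-dimensional and `ι` has dense range); the contraction in `E₀` absorbs the error
`ι (δ z) - ι (ψ z)`. Likewise `v ↦ T(v)` is only strongly continuous (continuous on `ι(E₁)`,
where it is `D₂B`, and uniformly bounded), which suffices for the continuity of
`δ' = (1 - T)⁻¹ D₁B`.
-/

open Filter Topology Set

section

variable {𝕜 F E₀ E₁ : Type*} [NontriviallyNormedField 𝕜]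
  [NormedAddCommGroup F] [NormedSpace 𝕜 F]
  [NormedAddCommGroup E₀] [NormedSpace 𝕜 E₀] [NormedAddCommGroup E₁] [NormedSpace 𝕜 E₁]

theorem DenseRange.continuousLinearMap_comp [CompleteSpace 𝕜] [FiniteDimensional 𝕜 F]
    {ι : E₁ →L[𝕜] E₀} (hι : DenseRange ι) :
    DenseRange fun H : F →L[𝕜] E₁ => ι.comp H := by
  let e : F ≃L[𝕜] (Fin (Module.finrank 𝕜 F) → 𝕜) :=
    ContinuousLinearEquiv.ofFinrankEq (Module.finrank_fin_fun 𝕜).symm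
  let Ψ₀ := (e.arrowCongr (1 : E₀ ≃L[𝕜] E₀)).trans (ContinuousLinearEquiv.piRing _)
  let Ψ₁ := (e.arrowCongr (1 : E₁ ≃L[𝕜] E₁)).trans (ContinuousLinearEquiv.piRing _)
  have hΦ : (fun H : F →L[𝕜] E₁ => ι.comp H) = Ψ₀.symm ∘ Pi.map (fun _ => ι) ∘ Ψ₁ := by
    funext H
    exact Ψ₀.eq_symm_apply.2 rfl
  rw [hΦ]
  exact Ψ₀.symm.surjective.denseRange.comp
    ((DenseRange.piMap fun _ => hι).comp Ψ₁.surjective.denseRange (by fun_prop))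
    Ψ₀.symm.continuous

theorem ContinuousLinearMap.sub_mul_norm_le_norm_sub_apply {T : E₀ →L[𝕜] E₀} {ρ : ℝ}
    (hT : ‖T‖ ≤ ρ) (x : E₀) : (1 - ρ) * ‖x‖ ≤ ‖x - T x‖ := by
  have h₁ : ‖x‖ ≤ ‖x - T x‖ + ‖T x‖ := norm_le_norm_sub_add x (T x)
  have h₂ : ‖T x‖ ≤ ρ * ‖x‖ := T.le_of_opNorm_le hT x
  linarith

theorem ContinuousLinearMap.isUnit_one_sub [CompleteSpace E₀] {T : E₀ →L[𝕜] E₀}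
    (hT : ‖T‖ < 1) : IsUnit (1 - T) :=
  (Units.oneSub T hT).isUnit

theorem tendsto_of_sub_apply_eq {α : Type*} {l : Filter α} {T : α → E₀ →L[𝕜] E₀}
    {T₀ : E₀ →L[𝕜] E₀} {x y : α → E₀} {x₀ y₀ : E₀} {ρ : ℝ} (hρ : ρ < 1)
    (hT : ∀ᶠ a in l, ‖T a‖ ≤ ρ) (hx : ∀ᶠ a in l, x a - T a (x a) = y a)
    (hx₀ : x₀ - T₀ x₀ = y₀) (hy : Tendsto y l (𝓝 y₀))
    (hTx₀ : Tendsto (fun a => T a x₀) l (𝓝 (T₀ x₀))) :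
    Tendsto x l (𝓝 x₀) := by
  rw [tendsto_iff_norm_sub_tendsto_zero] at hy hTx₀ ⊢
  have hlim : Tendsto (fun a => (‖y a - y₀‖ + ‖T a x₀ - T₀ x₀‖) / (1 - ρ)) l (𝓝 0) := by
    simpa using (hy.add hTx₀).div_const (1 - ρ)
  refine squeeze_zero' (Eventually.of_forall fun a => norm_nonneg _) ?_ hlim
  filter_upwards [hT, hx] with a hTa hxa
  have hdiff : (x a - x₀) - T a (x a - x₀) = (y a - y₀) + (T a x₀ - T₀ x₀) := by
    rw [map_sub, ← hxa, ← hx₀]; abel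
  rw [le_div_iff₀ (sub_pos.2 hρ), mul_comm]
  calc (1 - ρ) * ‖x a - x₀‖ ≤ ‖(x a - x₀) - T a (x a - x₀)‖ :=
        (T a).sub_mul_norm_le_norm_sub_apply hTa _
    _ ≤ ‖y a - y₀‖ + ‖T a x₀ - T₀ x₀‖ := hdiff ▸ norm_add_le _ _

theorem tendsto_apply_of_denseRange {G α : Type*} {l : Filter α} {T : α → E₀ →L[𝕜] E₁}
    {T₀ : E₀ →L[𝕜] E₁} {C : ℝ} {ι : G → E₀} (hι : DenseRange ι) (hT : ∀ᶠ a in l, ‖T a‖ ≤ C)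
    (hTι : ∀ g, Tendsto (fun a => T a (ι g)) l (𝓝 (T₀ (ι g)))) (x : E₀) :
    Tendsto (fun a => T a x) l (𝓝 (T₀ x)) := by
  rw [Metric.tendsto_nhds]
  intro ε hε
  set K := |C| + ‖T₀‖ + 1
  have hK : 0 < K := by positivity
  obtain ⟨g, hg⟩ := hι.exists_dist_lt x (show 0 < ε / (2 * K) by positivity)
  filter_upwards [hT, Metric.tendsto_nhds.1 (hTι g) (ε / 2) (half_pos hε)] with a hTa ha
  have hd : (‖T a‖ + ‖T₀‖) * dist x (ι g) ≤ K * (ε / (2 * K)) := by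
    gcongr
    linarith [le_abs_self C]
  have hKε : K * (ε / (2 * K)) = ε / 2 := by field_simp
  calc dist (T a x) (T₀ x)
      ≤ dist (T a x) (T a (ι g)) + dist (T a (ι g)) (T₀ (ι g)) + dist (T₀ (ι g)) (T₀ x) :=
        dist_triangle4 _ _ _ _
    _ ≤ ‖T a‖ * dist x (ι g) + dist (T a (ι g)) (T₀ (ι g)) + ‖T₀‖ * dist x (ι g) := by
        gcongr
        · exact (T a).dist_le_opNorm _ _
        · rw [dist_comm]; exact T₀.dist_le_opNorm _ _
    _ < ε := by linarith

theorem continuousOn_of_sub_apply_eq [CompleteSpace 𝕜] [FiniteDimensional 𝕜 F] {X : Type*}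
    [TopologicalSpace X] {s : Set X} {ι : E₁ →L[𝕜] E₀} (hι : DenseRange ι)
    {D : X → F × E₁ →L[𝕜] E₀} (hD : ContinuousOn D s) {T : X → E₀ →L[𝕜] E₀} {ρ : ℝ}
    (hρ : ρ < 1) (hT : ∀ v ∈ s, ‖T v‖ ≤ ρ) (hTι : ∀ v ∈ s, ∀ h, T v (ι h) = D v (0, h))
    {g' : X → F →L[𝕜] E₀} (hg' : ∀ v ∈ s, ∀ b, g' v b - T v (g' v b) = D v (b, 0)) :
    ContinuousOn g' s := by
  refine continuousOn_clm_apply.2 fun b v hv => ?_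
  have hDq : ∀ q, ContinuousWithinAt (fun z => D z q) s v := fun q =>
    (ContinuousLinearMap.apply 𝕜 E₀ q).continuous.continuousAt.comp_continuousWithinAt (hD v hv)
  have hTx : ∀ x, Tendsto (fun z => T z x) (𝓝[s] v) (𝓝 (T v x)) :=
    tendsto_apply_of_denseRange hι (eventually_nhdsWithin_of_forall hT) fun h =>
      (hDq (0, h)).congr (fun z hz => hTι z hz h) (hTι v hv h)
  exact tendsto_of_sub_apply_eq hρ (eventually_nhdsWithin_of_forall hT)
    (eventually_nhdsWithin_of_forall fun z hz => hg' z hz b) (hg' v hv b) (hDq (b, 0)) (hTx _)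

section SecondPartialExtension

variable [CompleteSpace E₀] (ι : E₁ →L[𝕜] E₀) (D : F × E₁ →L[𝕜] E₀)

-- Junk value `0` unless `ι` has dense range and `‖D (0, h)‖ ≤ C * ‖ι h‖` for some `C`.
noncomputable def secondPartialExtension : E₀ →L[𝕜] E₀ :=
  ((D.comp (ContinuousLinearMap.inr 𝕜 F E₁) : E₁ →L[𝕜] E₀) : E₁ →ₗ[𝕜] E₀).extendOfNorm ι

noncomputable def implicitFDeriv : F →L[𝕜] E₀ :=
  (Ring.inverse (1 - secondPartialExtension ι D)).comp (D.comp (ContinuousLinearMap.inl 𝕜 F E₁))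

variable {ι D} {ρ : ℝ}

theorem secondPartialExtension_apply (hι : DenseRange ι) (hD : ∀ h, ‖D (0, h)‖ ≤ ρ * ‖ι h‖)
    (h : E₁) : secondPartialExtension ι D (ι h) = D (0, h) :=
  LinearMap.extendOfNorm_eq hι ⟨ρ, hD⟩ h

theorem norm_secondPartialExtension_le (hι : DenseRange ι) (hρ : 0 ≤ ρ)
    (hD : ∀ h, ‖D (0, h)‖ ≤ ρ * ‖ι h‖) : ‖secondPartialExtension ι D‖ ≤ ρ :=
  LinearMap.opNorm_extendOfNorm_le hι hρ hD

theorem eq_secondPartialExtension (hι : DenseRange ι) (hD : ∀ h, ‖D (0, h)‖ ≤ ρ * ‖ι h‖)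
    {T : E₀ →L[𝕜] E₀} (hT : ∀ h, T (ι h) = D (0, h)) : T = secondPartialExtension ι D :=
  (LinearMap.extendOfNorm_unique hι ρ hD T (LinearMap.ext hT)).symm

theorem implicitFDeriv_sub_apply (hT : ‖secondPartialExtension ι D‖ < 1) (b : F) :
    implicitFDeriv ι D b - secondPartialExtension ι D (implicitFDeriv ι D b) = D (b, 0) := by
  simpa [implicitFDeriv] using
    congrArg (· (D (b, 0))) (Ring.mul_inverse_cancel _ (ContinuousLinearMap.isUnit_one_sub hT))

end SecondPartialExtension

theorem HasFDerivAt.norm_apply_le_of_lip_comp {f : E₁ → E₀} {S : E₁ →L[𝕜] E₀} {u₀ : E₁}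
    {G : Type*} [NormedAddCommGroup G] [NormedSpace 𝕜 G] {ι : E₁ →L[𝕜] G} {ρ : ℝ}
    (hf : HasFDerivAt f S u₀) (hρ : 0 ≤ ρ)
    (hlip : ∀ᶠ u in 𝓝 u₀, ‖f u - f u₀‖ ≤ ρ * ‖ι u - ι u₀‖) (h : E₁) :
    ‖S h‖ ≤ ρ * ‖ι h‖ := by
  have hline : HasDerivAt (fun t : 𝕜 => u₀ + t • h) h 0 := by
    simpa using ((hasDerivAt_id (0 : 𝕜)).smul_const h).const_add u₀
  refine (hf.comp_hasDerivAt_of_eq 0 hline (by simp)).le_of_lip' (by positivity) ?_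
  have hto : Tendsto (fun t : 𝕜 => u₀ + t • h) (𝓝 0) (𝓝 u₀) := by
    simpa using hline.continuousAt.tendsto
  filter_upwards [hto.eventually hlip] with t ht
  simpa [norm_smul, mul_comm, mul_left_comm] using ht

section Graph

variable {G : F → E₁ → E₀} {D : F × E₁ →L[𝕜] E₀} {s : Set F} {U : Set E₁} {v : F}

theorem HasFDerivWithinAt.norm_apply_inr_le {ι : E₁ →L[𝕜] E₀} {u : E₁} {ρ : ℝ}
    (hG : HasFDerivWithinAt (fun q : F × E₁ => G q.1 q.2) D (s ×ˢ U) (v, u))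
    (hv : v ∈ s) (hU : U ∈ 𝓝 u) (hρ : 0 ≤ ρ)
    (hlip : ∀ u' ∈ U, ‖G v u' - G v u‖ ≤ ρ * ‖ι u' - ι u‖) (h : E₁) :
    ‖D (0, h)‖ ≤ ρ * ‖ι h‖ := by
  have hGv : HasFDerivAt (G v) (D.comp (ContinuousLinearMap.inr 𝕜 F E₁)) u :=
    (hG.comp u (hasFDerivAt_prodMk_right v u).hasFDerivWithinAt
      fun _ hu' => ⟨hv, hu'⟩).hasFDerivAt hU
  simpa using hGv.norm_apply_le_of_lip_comp hρ (eventually_of_mem hU hlip) h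

theorem HasFDerivWithinAt.comp_graph {ψ : F → E₁} {H : F →L[𝕜] E₁}
    (hG : HasFDerivWithinAt (fun q : F × E₁ => G q.1 q.2) D (s ×ˢ U) (v, ψ v))
    (hψ : HasFDerivAt ψ H v) (hU : U ∈ 𝓝 (ψ v)) :
    HasFDerivWithinAt (fun z => G z (ψ z)) (D.comp ((ContinuousLinearMap.id 𝕜 F).prod H))
      s v := by
  refine hG.comp_of_tendsto (f := fun z => (z, ψ z)) v
    ((hasFDerivAt_id v).prodMk hψ).hasFDerivWithinAt (tendsto_nhdsWithin_iff.2 ⟨?_, ?_⟩)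
  · exact (continuousWithinAt_id.prodMk hψ.continuousAt.continuousWithinAt).tendsto
  · filter_upwards [self_mem_nhdsWithin,
      nhdsWithin_le_nhds (hψ.continuousAt.preimage_mem_nhds hU)] with z hz hzU using ⟨hz, hzU⟩

theorem eventually_norm_remainder_le_of_fixedPoint {ι : E₁ →L[𝕜] E₀} {g : F → E₁}
    {T : E₀ →L[𝕜] E₀} {g' : F →L[𝕜] E₀} {H : F →L[𝕜] E₁} {ρ ε : ℝ}
    (hG : HasFDerivWithinAt (fun q : F × E₁ => G q.1 q.2) D (s ×ˢ U) (v, g v))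
    (hU : U ∈ 𝓝 (g v)) (hv : v ∈ s) (hfix : ∀ z ∈ s, ι (g z) = G z (g z))
    (hcontr : ∀ z ∈ s, ∀ u ∈ U, ‖G z (g z) - G z u‖ ≤ ρ * ‖ι (g z) - ι u‖)
    (hρ : ρ < 1) (hT : ‖T‖ ≤ ρ) (hTι : ∀ h, T (ι h) = D (0, h))
    (hg' : ∀ b, g' b - T (g' b) = D (b, 0)) (hε : 0 < ε) (hH : ‖ι.comp H - g'‖ ≤ ε) :
    ∀ᶠ z in 𝓝[s] v, (1 - ρ) * ‖ι (g z) - ι (g v) - g' (z - v)‖ ≤ 3 * (ε * ‖z - v‖) := by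
  have hρ₀ : 0 ≤ ρ := (norm_nonneg T).trans hT
  set ψ : F → E₁ := fun z => g v + H (z - v)
  have hψv : ψ v = g v := by simp [ψ]
  have hψ : HasFDerivAt ψ H v :=
    ((H.hasFDerivAt.comp v ((hasFDerivAt_id v).sub_const v)).const_add (g v)).congr_fderiv
      (by ext; simp)
  rw [← hψv] at hG hU
  filter_upwards [Asymptotics.isLittleO_iff.1
      (hasFDerivWithinAt_iff_isLittleO.1 (hG.comp_graph hψ hU)) hε,
    nhdsWithin_le_nhds (hψ.continuousAt.preimage_mem_nhds hU), self_mem_nhdsWithin]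
    with z hrem hzU hz
  set b := z - v
  set X := ι (g z) - ι (g v) - g' b
  have hHb : ‖ι (H b) - g' b‖ ≤ ε * ‖b‖ := (ι.comp H - g').le_of_opNorm_le hH b
  have hsplit : X = (G z (g z) - G z (ψ z))
      + (G z (ψ z) - G v (ψ v) - D.comp ((ContinuousLinearMap.id 𝕜 F).prod H) b)
      + T (ι (H b) - g' b) := by
    have hDb : D (b, H b) = D (b, 0) + D (0, H b) := by
      rw [← map_add, Prod.mk_add_mk, add_zero, zero_add]
    simp only [X, ContinuousLinearMap.comp_apply, ContinuousLinearMap.prod_apply,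
      ContinuousLinearMap.id_apply, hDb, map_sub, hTι, ← hg', hfix z hz, hψv, hfix v hv]
    abel
  have hgψ : ι (g z) - ι (ψ z) = X - (ι (H b) - g' b) := by
    simp only [X, ψ, map_add]; abel
  have h₁ : ‖G z (g z) - G z (ψ z)‖ ≤ ρ * (‖X‖ + ε * ‖b‖) := by
    refine (hcontr z hz _ hzU).trans (mul_le_mul_of_nonneg_left ?_ hρ₀)
    rw [hgψ]; exact (norm_sub_le _ _).trans (by gcongr)
  have h₃ : ‖T (ι (H b) - g' b)‖ ≤ ρ * (ε * ‖b‖) :=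
    (T.le_of_opNorm_le hT _).trans (by gcongr)
  have hX : ‖X‖ ≤ ρ * (‖X‖ + ε * ‖b‖) + ε * ‖b‖ + ρ * (ε * ‖b‖) :=
    calc ‖X‖ ≤ _ := hsplit ▸ norm_add₃_le
      _ ≤ _ := add_le_add (add_le_add h₁ hrem) h₃
  have hεb : 0 ≤ (1 - ρ) * (ε * ‖b‖) := by have := sub_pos.2 hρ; positivity
  linarith

theorem hasFDerivWithinAt_of_fixedPoint_of_contraction [CompleteSpace 𝕜]
    [FiniteDimensional 𝕜 F] {ι : E₁ →L[𝕜] E₀} (hι : DenseRange ι) {g : F → E₁}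
    {T : E₀ →L[𝕜] E₀} {g' : F →L[𝕜] E₀} {ρ : ℝ}
    (hG : HasFDerivWithinAt (fun q : F × E₁ => G q.1 q.2) D (s ×ˢ U) (v, g v))
    (hU : U ∈ 𝓝 (g v)) (hv : v ∈ s) (hfix : ∀ z ∈ s, ι (g z) = G z (g z))
    (hcontr : ∀ z ∈ s, ∀ u ∈ U, ‖G z (g z) - G z u‖ ≤ ρ * ‖ι (g z) - ι u‖)
    (hρ : ρ < 1) (hT : ‖T‖ ≤ ρ) (hTι : ∀ h, T (ι h) = D (0, h))
    (hg' : ∀ b, g' b - T (g' b) = D (b, 0)) :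
    HasFDerivWithinAt (fun z => ι (g z)) g' s v := by
  rw [hasFDerivWithinAt_iff_isLittleO, Asymptotics.isLittleO_iff]
  intro c hc
  have hρ' : 0 < 1 - ρ := sub_pos.2 hρ
  obtain ⟨H, hH⟩ := hι.continuousLinearMap_comp.exists_dist_lt g'
    (show 0 < (1 - ρ) * c / 3 by positivity)
  rw [dist_comm, dist_eq_norm] at hH
  filter_upwards [eventually_norm_remainder_le_of_fixedPoint hG hU hv hfix hcontr hρ hT hTι hg'
    (by positivity) hH.le] with z hz
  refine le_of_mul_le_mul_left ?_ hρ'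
  linarith

end Graph

end

theorem contraction_germ_regularity_general
    (n : ℕ)
    (E₀ E₁ : Type*) [NormedAddCommGroup E₀] [NormedSpace ℝ E₀] [CompleteSpace E₀]
    [NormedAddCommGroup E₁] [NormedSpace ℝ E₁]
    (ι : E₁ →L[ℝ] E₀) (hιdense : DenseRange ι)
    (V : Set (Fin n → ℝ))
    (hV0 : (0 : Fin n → ℝ) ∈ V)
    -- (i) U₁ is an open neighborhood of 0 in E₁ and B : V × U₁ → E₀ is of class C¹
    -- (one-sided, i.e. derivatives within the set, with continuous derivative)
    (U₁ : Set E₁) (hU₁ : IsOpen U₁)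
    (B : (Fin n → ℝ) → E₁ → E₀)
    (DB : (Fin n → ℝ) × E₁ → ((Fin n → ℝ) × E₁) →L[ℝ] E₀)
    (hBdiff : ∀ p ∈ V ×ˢ U₁,
      HasFDerivWithinAt (fun q : (Fin n → ℝ) × E₁ => B q.1 q.2) (DB p) (V ×ˢ U₁) p)
    (hDBcont : ContinuousOn DB (V ×ˢ U₁))
    -- (ii) B takes values in ι(E₁) and the two contraction estimates
    (ρ₀ r : ℝ) (hρ₀0 : 0 < ρ₀) (hρ₀1 : ρ₀ < 1) (hr : 0 < r)
    (hcontr₀ : ∀ v ∈ V, ‖v‖ < r → ∀ u ∈ U₁, ∀ u' ∈ U₁, ‖u‖ < r → ‖u'‖ < r →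
      ‖B v u - B v u'‖ ≤ ρ₀ * ‖ι u - ι u'‖)
    -- (iii) δ is a continuous solution germ
    (δ : (Fin n → ℝ) → E₁) (hδcont : ContinuousOn δ V) (hδ0 : δ 0 = 0)
    (hδU : ∀ v ∈ V, δ v ∈ U₁) (hδfix : ∀ v ∈ V, ι (δ v) = B v (δ v)) :
    -- conclusion: on a relatively open neighborhood V' of 0 in V
    ∃ V' : Set (Fin n → ℝ), V' ⊆ V ∧ (0 : Fin n → ℝ) ∈ V' ∧
      (∃ U' : Set (Fin n → ℝ), IsOpen U' ∧ V' = V ∩ U') ∧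
      ∃ T : (Fin n → ℝ) → (E₀ →L[ℝ] E₀),
        (∀ v ∈ V',
          -- (a) the bound on D₂B(v, δ(v)), its unique bounded extension T(v),
          -- and L(v) = id - T(v) is a Banach space isomorphism of E₀
          (∀ h : E₁, ‖DB (v, δ v) (0, h)‖ ≤ ρ₀ * ‖ι h‖) ∧
          ‖T v‖ ≤ ρ₀ ∧
          (∀ h : E₁, T v (ι h) = DB (v, δ v) (0, h)) ∧
          (∀ T' : E₀ →L[ℝ] E₀, (∀ h : E₁, T' (ι h) = DB (v, δ v) (0, h)) → T' = T v) ∧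
          (∃ Lv : E₀ ≃L[ℝ] E₀, ∀ x : E₀, Lv x = x - T v x)) ∧
        -- (b) v ↦ ι(δ(v)) is C¹ near 0 with derivative δ'(v) = L(v)⁻¹ ∘ D₁B(v, δ(v)),
        -- depending continuously on v
        ∃ δ' : (Fin n → ℝ) → ((Fin n → ℝ) →L[ℝ] E₀),
          ContinuousOn δ' V' ∧
          ∀ v ∈ V', HasFDerivWithinAt (fun z => ι (δ z)) (δ' v) V' v ∧
            ∀ b : Fin n → ℝ, δ' v b - T v (δ' v b) = DB (v, δ v) (b, 0) := by
  obtain ⟨W, hWo, hW0, hWδ⟩ := mem_nhdsWithin.1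
    ((hδcont 0 hV0).preimage_mem_nhdsWithin (Metric.ball_mem_nhds (δ 0) hr))
  set V' := V ∩ (W ∩ Metric.ball 0 r)
  set U := U₁ ∩ Metric.ball 0 r
  have hV' : ∀ v ∈ V', v ∈ V ∧ ‖v‖ < r ∧ δ v ∈ U := fun v ⟨hvV, hvW, hvr⟩ =>
    ⟨hvV, mem_ball_zero_iff.1 hvr, hδU v hvV, by simpa [hδ0] using hWδ ⟨hvW, hvV⟩⟩
  have hU : ∀ v ∈ V', U ∈ 𝓝 (δ v) := fun v hv =>
    (hU₁.inter Metric.isOpen_ball).mem_nhds (hV' v hv).2.2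
  have hBV' : ∀ v ∈ V', HasFDerivWithinAt (fun q : (Fin n → ℝ) × E₁ => B q.1 q.2)
      (DB (v, δ v)) (V' ×ˢ U) (v, δ v) := fun v hv =>
    (hBdiff _ ⟨(hV' v hv).1, hδU v (hV' v hv).1⟩).mono
      (prod_mono inter_subset_left inter_subset_left)
  have hcontr : ∀ v ∈ V', ∀ u ∈ U, ∀ u' ∈ U, ‖B v u - B v u'‖ ≤ ρ₀ * ‖ι u - ι u'‖ :=
    fun v hv u hu u' hu' => hcontr₀ v (hV' v hv).1 (hV' v hv).2.1 u hu.1 u' hu'.1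
      (mem_ball_zero_iff.1 hu.2) (mem_ball_zero_iff.1 hu'.2)
  have hD₂ : ∀ v ∈ V', ∀ h, ‖DB (v, δ v) (0, h)‖ ≤ ρ₀ * ‖ι h‖ := fun v hv =>
    (hBV' v hv).norm_apply_inr_le hv (hU v hv) hρ₀0.le fun u hu =>
      hcontr v hv u hu _ (hV' v hv).2.2
  have hDB' : ContinuousOn (fun v => DB (v, δ v)) V' :=
    (hDBcont.comp (continuousOn_id.prodMk hδcont) fun v hv => ⟨hv, hδU v hv⟩).mono
      inter_subset_left
  let T v := secondPartialExtension ι (DB (v, δ v))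
  let δ' v := implicitFDeriv ι (DB (v, δ v))
  have hT : ∀ v ∈ V', ‖T v‖ ≤ ρ₀ := fun v hv =>
    norm_secondPartialExtension_le hιdense hρ₀0.le (hD₂ v hv)
  have hTι : ∀ v ∈ V', ∀ h, T v (ι h) = DB (v, δ v) (0, h) := fun v hv =>
    secondPartialExtension_apply hιdense (hD₂ v hv)
  have hδ' : ∀ v ∈ V', ∀ b, δ' v b - T v (δ' v b) = DB (v, δ v) (b, 0) := fun v hv =>
    implicitFDeriv_sub_apply ((hT v hv).trans_lt hρ₀1)
  refine ⟨V', inter_subset_left, ⟨hV0, hW0, Metric.mem_ball_self hr⟩,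
    ⟨_, hWo.inter Metric.isOpen_ball, rfl⟩, T, fun v hv => ⟨hD₂ v hv, hT v hv, hTι v hv,
      fun _ => eq_secondPartialExtension hιdense (hD₂ v hv),
      ⟨ContinuousLinearEquiv.unitsEquiv ℝ E₀
        (ContinuousLinearMap.isUnit_one_sub ((hT v hv).trans_lt hρ₀1)).unit, fun _ => rfl⟩⟩,
    δ', continuousOn_of_sub_apply_eq hιdense hDB' hρ₀1 hT hTι hδ', fun v hv => ⟨?_, hδ' v hv⟩⟩
  exact hasFDerivWithinAt_of_fixedPoint_of_contraction hιdense (hBV' v hv) (hU v hv) hv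
    (fun z hz => hδfix z (hV' z hz).1) (fun z hz u hu => hcontr z hz _ (hV' z hz).2.2 u hu)
    hρ₀1 (hT v hv) (hTι v hv) (hδ' v hv)

/-- Regularity of the solution germ, Theorem 2.3, stated on a fixed pair of
adjacent levels `E₁ ⊆ E₀` realized by an injective dense-range bounded map `ι : E₁ → E₀`. -/
theorem contraction_germ_regularity
    (n l : ℕ) (hl : l ≤ n)
    (E₀ E₁ : Type*) [NormedAddCommGroup E₀] [NormedSpace ℝ E₀] [CompleteSpace E₀]
    [NormedAddCommGroup E₁] [NormedSpace ℝ E₁] [CompleteSpace E₁]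
    (ι : E₁ →L[ℝ] E₀) (hιinj : Function.Injective ι) (hιdense : DenseRange ι)
    -- the partial quadrant [0,∞)^l × ℝ^{n-l} in ℝ^n
    (Q : Set (Fin n → ℝ)) (hQ : Q = {x : Fin n → ℝ | ∀ i : Fin n, (i : ℕ) < l → 0 ≤ x i})
    -- V is a relatively open neighborhood of 0 in Q
    (V : Set (Fin n → ℝ)) (hVQ : V ⊆ Q)
    (hVopen : ∃ U : Set (Fin n → ℝ), IsOpen U ∧ V = Q ∩ U)
    (hV0 : (0 : Fin n → ℝ) ∈ V)
    -- (i) U₁ is an open neighborhood of 0 in E₁ and B : V × U₁ → E₀ is of class C¹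
    -- (one-sided, i.e. derivatives within the set, with continuous derivative)
    (U₁ : Set E₁) (hU₁ : IsOpen U₁) (hU₁0 : (0 : E₁) ∈ U₁)
    (B : (Fin n → ℝ) → E₁ → E₀)
    (DB : (Fin n → ℝ) × E₁ → ((Fin n → ℝ) × E₁) →L[ℝ] E₀)
    (hBdiff : ∀ p ∈ V ×ˢ U₁,
      HasFDerivWithinAt (fun q : (Fin n → ℝ) × E₁ => B q.1 q.2) (DB p) (V ×ˢ U₁) p)
    (hDBcont : ContinuousOn DB (V ×ˢ U₁))
    -- (ii) B takes values in ι(E₁) and the two contraction estimates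
    (hBrange : ∀ v ∈ V, ∀ u ∈ U₁, B v u ∈ Set.range ι)
    (ρ₀ ρ₁ r : ℝ) (hρ₀0 : 0 < ρ₀) (hρ₀1 : ρ₀ < 1) (hρ₁0 : 0 < ρ₁) (hρ₁1 : ρ₁ < 1) (hr : 0 < r)
    (hcontr₀ : ∀ v ∈ V, ‖v‖ < r → ∀ u ∈ U₁, ∀ u' ∈ U₁, ‖u‖ < r → ‖u'‖ < r →
      ‖B v u - B v u'‖ ≤ ρ₀ * ‖ι u - ι u'‖)
    (hcontr₁ : ∀ v ∈ V, ‖v‖ < r → ∀ u ∈ U₁, ∀ u' ∈ U₁, ‖u‖ < r → ‖u'‖ < r →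
      ∀ w w' : E₁, ι w = B v u → ι w' = B v u' → ‖w - w'‖ ≤ ρ₁ * ‖u - u'‖)
    -- (iii) δ is a continuous solution germ
    (δ : (Fin n → ℝ) → E₁) (hδcont : ContinuousOn δ V) (hδ0 : δ 0 = 0)
    (hδU : ∀ v ∈ V, δ v ∈ U₁) (hδfix : ∀ v ∈ V, ι (δ v) = B v (δ v)) :
    -- conclusion: on a relatively open neighborhood V' of 0 in V
    ∃ V' : Set (Fin n → ℝ), V' ⊆ V ∧ (0 : Fin n → ℝ) ∈ V' ∧
      (∃ U' : Set (Fin n → ℝ), IsOpen U' ∧ V' = V ∩ U') ∧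
      ∃ T : (Fin n → ℝ) → (E₀ →L[ℝ] E₀),
        (∀ v ∈ V',
          -- (a) the bound on D₂B(v, δ(v)), its unique bounded extension T(v),
          -- and L(v) = id - T(v) is a Banach space isomorphism of E₀
          (∀ h : E₁, ‖DB (v, δ v) (0, h)‖ ≤ ρ₀ * ‖ι h‖) ∧
          ‖T v‖ ≤ ρ₀ ∧
          (∀ h : E₁, T v (ι h) = DB (v, δ v) (0, h)) ∧
          (∀ T' : E₀ →L[ℝ] E₀, (∀ h : E₁, T' (ι h) = DB (v, δ v) (0, h)) → T' = T v) ∧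
          (∃ Lv : E₀ ≃L[ℝ] E₀, ∀ x : E₀, Lv x = x - T v x)) ∧
        -- (b) v ↦ ι(δ(v)) is C¹ near 0 with derivative δ'(v) = L(v)⁻¹ ∘ D₁B(v, δ(v)),
        -- depending continuously on v
        ∃ δ' : (Fin n → ℝ) → ((Fin n → ℝ) →L[ℝ] E₀),
          ContinuousOn δ' V' ∧
          ∀ v ∈ V', HasFDerivWithinAt (fun z => ι (δ z)) (δ' v) V' v ∧
            ∀ b : Fin n → ℝ, δ' v b - T v (δ' v b) = DB (v, δ v) (b, 0) :=
  contraction_germ_regularity_general n E₀ E₁ ι hιdense V hV0 U₁ hU₁ B DB hBdiff hDBcont ρ₀ r hρ₀0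
    hρ₀1 hr hcontr₀ δ hδcont hδ0 hδU hδfix
end

section
/- Assume: (i) U₁ is an open neighborhood of 0 in E₁ and B : V × U₁ → E₀ is of class C¹; (ii) there exist constants 0 < ρ₀ < 1 and r > 0 such that ‖B(v,u) − B(v,u′)‖₀ ≤ ρ₀‖ι(u) − ι(u′)‖₀ for all v ∈ V with |v| < r and u, u′ ∈ U₁ with ‖u‖₁ < r; (iii) δ : V → U₁ is continuous as a map into E₁ with δ(0) = 0 and ι(δ(v)) = B(v, δ(v)) for all v ∈ V. Then the map v ↦ ι(δ(v)) is locally Lipschitz at 0 into E₀: there exist a relatively open neighborhood V′ of 0 in V and a constant c ≥ 0 such that ‖ι(δ(v + b)) − ι(δ(v))‖₀ ≤ c·|b| whenever v and v + b both lie in V′. (Difference-quotient bound (2.2) in the proof of Theorem 2.3.) -/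
/-!
Near `(0, 0)` the C¹ map `B` is Lipschitz, with some constant `K`, on a neighbourhood taken
within the convex set `Q × E₁`; the mean value inequality needs this convexity, which `V × U₁`
need not have. Splitting
`ι (δ v') - ι (δ v) = (B v' (δ v') - B v' (δ v)) + (B v' (δ v) - B v (δ v))`,
the first difference is at most `ρ₀ ‖ι (δ v') - ι (δ v)‖` by the contraction estimate and the
second at most `K ‖v' - v‖`, so `(1 - ρ₀) ‖ι (δ v') - ι (δ v)‖ ≤ K ‖v' - v‖`. Continuity of `δ`
at `0` keeps all the points involved where both estimates hold.
-/

open Set Filter Topology Metric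

theorem convex_setOf_forall_nonneg {α : Type*} (p : α → Prop) :
    Convex ℝ {x : α → ℝ | ∀ i, p i → 0 ≤ x i} := by
  intro x hx y hy a b ha hb _ i hi
  have := hx i hi
  have := hy i hi
  simp only [Pi.add_apply, Pi.smul_apply, smul_eq_mul]
  positivity

theorem ContDiffOn.exists_lipschitzOnWith_of_mem_nhdsWithin {E F : Type*}
    [NormedAddCommGroup E] [NormedSpace ℝ E] [NormedAddCommGroup F] [NormedSpace ℝ F]
    {f : E → F} {s C : Set E} {x : E} (hf : ContDiffOn ℝ 1 f s) (hx : x ∈ s)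
    (hC : Convex ℝ C) (hs : s ∈ 𝓝[C] x) :
    ∃ K, ∃ t ∈ 𝓝[C] x, LipschitzOnWith K f t :=
  ((hf x hx).mono_of_mem_nhdsWithin hs).exists_lipschitzOnWith hC

theorem LipschitzOnWith.norm_sub_le_of_snd_eq {X Y F : Type*} [SeminormedAddCommGroup X]
    [SeminormedAddCommGroup Y] [SeminormedAddCommGroup F] {f : X → Y → F} {K : NNReal}
    {t : Set (X × Y)} (hf : LipschitzOnWith K (fun q : X × Y => f q.1 q.2) t) {x x' : X} {y : Y}
    (hx : (x, y) ∈ t) (hx' : (x', y) ∈ t) :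
    ‖f x' y - f x y‖ ≤ K * ‖x' - x‖ := by
  simpa [Prod.norm_mk] using hf.norm_sub_le hx' hx

theorem norm_sub_le_div_of_fixed_of_contraction {X E₁ E₀ : Type*} [SeminormedAddCommGroup X]
    [SeminormedAddCommGroup E₀] {B : X → E₁ → E₀} {ι : E₁ → E₀} {ρ K : ℝ} (hρ : ρ < 1)
    {v v' : X} {u u' : E₁} (hu : ι u = B v u) (hu' : ι u' = B v' u')
    (hcontr : ‖B v' u' - B v' u‖ ≤ ρ * ‖ι u' - ι u‖) (hlip : ‖B v' u - B v u‖ ≤ K * ‖v' - v‖) :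
    ‖ι u' - ι u‖ ≤ K / (1 - ρ) * ‖v' - v‖ := by
  have h : ‖ι u' - ι u‖ ≤ ρ * ‖ι u' - ι u‖ + K * ‖v' - v‖ :=
    calc ‖ι u' - ι u‖ = ‖(B v' u' - B v' u) + (B v' u - B v u)‖ := by
          rw [hu, hu', sub_add_sub_cancel]
      _ ≤ ‖B v' u' - B v' u‖ + ‖B v' u - B v u‖ := norm_add_le _ _
      _ ≤ ρ * ‖ι u' - ι u‖ + K * ‖v' - v‖ := add_le_add hcontr hlip
  rw [div_mul_eq_mul_div, le_div_iff₀ (sub_pos.2 hρ)]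
  linarith

theorem contraction_germ_lipschitz_general
    (n l : ℕ)
    (E₀ E₁ : Type*) [NormedAddCommGroup E₀] [NormedSpace ℝ E₀]
    [NormedAddCommGroup E₁] [NormedSpace ℝ E₁]
    (ι : E₁ →L[ℝ] E₀)
    -- the partial quadrant [0,∞)^l × ℝ^{n-l} in ℝ^n
    (Q : Set (Fin n → ℝ)) (hQ : Q = {x : Fin n → ℝ | ∀ i : Fin n, (i : ℕ) < l → 0 ≤ x i})
    -- V is a relatively open neighborhood of 0 in Q
    (V : Set (Fin n → ℝ))
    (hVopen : ∃ U : Set (Fin n → ℝ), IsOpen U ∧ V = Q ∩ U)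
    (hV0 : (0 : Fin n → ℝ) ∈ V)
    -- (i) U₁ is an open neighborhood of 0 in E₁ and B : V × U₁ → E₀ is of class C¹
    (U₁ : Set E₁) (hU₁ : IsOpen U₁) (hU₁0 : (0 : E₁) ∈ U₁)
    (B : (Fin n → ℝ) → E₁ → E₀)
    (hB : ContDiffOn ℝ 1 (fun q : (Fin n → ℝ) × E₁ => B q.1 q.2) (V ×ˢ U₁))
    -- (ii) the contraction estimate
    (ρ₀ r : ℝ) (hρ₀1 : ρ₀ < 1) (hr : 0 < r)
    (hcontr₀ : ∀ v ∈ V, ‖v‖ < r → ∀ u ∈ U₁, ∀ u' ∈ U₁, ‖u‖ < r → ‖u'‖ < r →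
      ‖B v u - B v u'‖ ≤ ρ₀ * ‖ι u - ι u'‖)
    -- (iii) δ is a continuous solution germ
    (δ : (Fin n → ℝ) → E₁) (hδcont : ContinuousOn δ V) (hδ0 : δ 0 = 0)
    (hδU : ∀ v ∈ V, δ v ∈ U₁) (hδfix : ∀ v ∈ V, ι (δ v) = B v (δ v)) :
    -- conclusion: v ↦ ι(δ(v)) is locally Lipschitz at 0 into E₀
    ∃ V' : Set (Fin n → ℝ), V' ⊆ V ∧ (0 : Fin n → ℝ) ∈ V' ∧
      (∃ U' : Set (Fin n → ℝ), IsOpen U' ∧ V' = V ∩ U') ∧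
      ∃ c : ℝ, 0 ≤ c ∧ ∀ v ∈ V', ∀ v' ∈ V', ‖ι (δ v') - ι (δ v)‖ ≤ c * ‖v' - v‖ := by
  obtain ⟨U, hU, rfl⟩ := hVopen
  have hVU₁ : (Q ∩ U) ×ˢ U₁ ∈ 𝓝[Q ×ˢ univ] ((0 : Fin n → ℝ), (0 : E₁)) := by
    rw [nhdsWithin_prod_eq, nhdsWithin_univ]
    exact prod_mem_prod (inter_mem_nhdsWithin Q (hU.mem_nhds hV0.2)) (hU₁.mem_nhds hU₁0)
  obtain ⟨K, t, ht, hlip⟩ := hB.exists_lipschitzOnWith_of_mem_nhdsWithin ⟨hV0, hU₁0⟩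
    ((hQ ▸ convex_setOf_forall_nonneg _).prod convex_univ) hVU₁
  rw [nhdsWithin_prod_eq, nhdsWithin_univ] at ht
  obtain ⟨t₁, ht₁, t₂, ht₂, hprod⟩ := mem_prod_iff.1 ht
  have hδ : Tendsto δ (𝓝[Q ∩ U] 0) (𝓝 0) := hδ0 ▸ hδcont 0 hV0
  have hgood : ∀ᶠ v in 𝓝[Q ∩ U] 0,
      v ∈ Q ∩ U ∧ v ∈ t₁ ∧ v ∈ ball 0 r ∧ δ v ∈ t₂ ∧ δ v ∈ ball 0 r := by
    filter_upwards [self_mem_nhdsWithin, nhdsWithin_mono _ inter_subset_left ht₁,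
      nhdsWithin_le_nhds (ball_mem_nhds 0 hr), hδ ht₂, hδ (ball_mem_nhds 0 hr)]
      with v hvV hvt₁ hvr hδvt₂ hδvr
    exact ⟨hvV, hvt₁, hvr, hδvt₂, hδvr⟩
  obtain ⟨U', hU', h0U', hU'good⟩ := mem_nhdsWithin.1 hgood
  refine ⟨Q ∩ U ∩ U', inter_subset_left, ⟨hV0, h0U'⟩, ⟨U', hU', rfl⟩, K / (1 - ρ₀),
    div_nonneg K.2 (sub_nonneg.2 hρ₀1.le), fun v hv v' hv' => ?_⟩
  obtain ⟨hvV, hvt₁, -, hδvt₂, hδvr⟩ := hU'good ⟨hv.2, hv.1⟩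
  obtain ⟨hv'V, hv't₁, hv'r, -, hδv'r⟩ := hU'good ⟨hv'.2, hv'.1⟩
  exact norm_sub_le_div_of_fixed_of_contraction hρ₀1 (hδfix v hvV) (hδfix v' hv'V)
    (hcontr₀ v' hv'V (mem_ball_zero_iff.1 hv'r) _ (hδU v' hv'V) _ (hδU v hvV)
      (mem_ball_zero_iff.1 hδv'r) (mem_ball_zero_iff.1 hδvr))
    (hlip.norm_sub_le_of_snd_eq (hprod ⟨hvt₁, hδvt₂⟩) (hprod ⟨hv't₁, hδvt₂⟩))

/-- difference-quotient bound (2.2) in the proof of Theorem 2.3: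
the solution germ of a contraction germ of class C¹ is locally Lipschitz at 0 on the lower
level. -/
theorem contraction_germ_lipschitz
    (n l : ℕ) (hl : l ≤ n)
    (E₀ E₁ : Type*) [NormedAddCommGroup E₀] [NormedSpace ℝ E₀]
    [NormedAddCommGroup E₁] [NormedSpace ℝ E₁]
    (ι : E₁ →L[ℝ] E₀) (hιinj : Function.Injective ι) (hιdense : DenseRange ι)
    -- the partial quadrant [0,∞)^l × ℝ^{n-l} in ℝ^n
    (Q : Set (Fin n → ℝ)) (hQ : Q = {x : Fin n → ℝ | ∀ i : Fin n, (i : ℕ) < l → 0 ≤ x i})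
    -- V is a relatively open neighborhood of 0 in Q
    (V : Set (Fin n → ℝ)) (hVQ : V ⊆ Q)
    (hVopen : ∃ U : Set (Fin n → ℝ), IsOpen U ∧ V = Q ∩ U)
    (hV0 : (0 : Fin n → ℝ) ∈ V)
    -- (i) U₁ is an open neighborhood of 0 in E₁ and B : V × U₁ → E₀ is of class C¹
    (U₁ : Set E₁) (hU₁ : IsOpen U₁) (hU₁0 : (0 : E₁) ∈ U₁)
    (B : (Fin n → ℝ) → E₁ → E₀)
    (hB : ContDiffOn ℝ 1 (fun q : (Fin n → ℝ) × E₁ => B q.1 q.2) (V ×ˢ U₁))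
    -- (ii) the contraction estimate
    (ρ₀ r : ℝ) (hρ₀0 : 0 < ρ₀) (hρ₀1 : ρ₀ < 1) (hr : 0 < r)
    (hcontr₀ : ∀ v ∈ V, ‖v‖ < r → ∀ u ∈ U₁, ∀ u' ∈ U₁, ‖u‖ < r → ‖u'‖ < r →
      ‖B v u - B v u'‖ ≤ ρ₀ * ‖ι u - ι u'‖)
    -- (iii) δ is a continuous solution germ
    (δ : (Fin n → ℝ) → E₁) (hδcont : ContinuousOn δ V) (hδ0 : δ 0 = 0)
    (hδU : ∀ v ∈ V, δ v ∈ U₁) (hδfix : ∀ v ∈ V, ι (δ v) = B v (δ v)) :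
    -- conclusion: v ↦ ι(δ(v)) is locally Lipschitz at 0 into E₀
    ∃ V' : Set (Fin n → ℝ), V' ⊆ V ∧ (0 : Fin n → ℝ) ∈ V' ∧
      (∃ U' : Set (Fin n → ℝ), IsOpen U' ∧ V' = V ∩ U') ∧
      ∃ c : ℝ, 0 ≤ c ∧ ∀ v ∈ V', ∀ v' ∈ V', ‖ι (δ v') - ι (δ v)‖ ≤ c * ‖v' - v‖ :=
  contraction_germ_lipschitz_general n l E₀ E₁ ι Q hQ V hVopen hV0 U₁ hU₁ hU₁0 B hB ρ₀ r hρ₀1 hr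
    hcontr₀ δ hδcont hδ0 hδU hδfix
end

section
/- Let E and F be real Banach spaces and let t ↦ T_t be a map from [0,1] into the space of bounded linear operators from E to F, continuous in the operator norm. Assume each T_t is Fredholm: ker T_t is finite-dimensional and the range of T_t is closed and has a finite-dimensional complement in F. Then there exist a finite-dimensional subspace C ⊆ F and a closed subspace R ⊆ F with F = C ⊕ R (a topological direct sum) such that, denoting by P : F → F the continuous linear projection onto R along C, the operator P ∘ T_t : E → R is surjective for every t ∈ [0,1]. (Existence of a common stabilizing projection for a continuous arc of Fredholm operators, used in the construction of the determinant line bundle.) -/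
/-!
Surjectivity is an open condition on bounded operators between Banach spaces: by the open
mapping theorem a surjection has a bounded nonlinear right inverse, and a small perturbation of
it is still onto. Applied to `E × C → F, (x, c) ↦ T x + c`, this shows that a finite-dimensional
`C` with `range T_t + C = F` also satisfies `range T_s + C = F` for `s` near `t`. By compactness
finitely many such `C` cover `[0, 1]`, and their sum works for every `t`. The projection onto a
closed complement `R` of this sum, along it, then maps every `range T_t` onto `R`.
-/

open Topology

section Surjective

variable {𝕜 E F : Type*} [NontriviallyNormedField 𝕜]
  [NormedAddCommGroup E] [NormedSpace 𝕜 E] [CompleteSpace E]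
  [NormedAddCommGroup F] [NormedSpace 𝕜 F]

theorem ContinuousLinearMap.surjective_of_norm_sub_lt {f g : E →L[𝕜] F}
    (fsymm : f.NonlinearRightInverse) (hg : ‖g - f‖ < (fsymm.nnnorm : ℝ)⁻¹) :
    Function.Surjective g := by
  have happrox : ApproximatesLinearOn g f Set.univ ‖g - f‖₊ := fun x _ y _ => by
    rw [show g x - g y - f (x - y) = (g - f) (x - y) by simp only [map_sub, sub_apply]; abel]
    exact (g - f).le_opNorm (x - y)
  have hopen : IsOpen (Set.range g) := by
    simpa using happrox.open_image fsymm isOpen_univ (Or.inr (by exact_mod_cast hg))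
  have htop : LinearMap.range (g : E →ₗ[𝕜] F) = ⊤ :=
    Submodule.eq_top_of_nonempty_interior' _ ⟨0, hopen.interior_eq.symm ▸ ⟨0, map_zero g⟩⟩
  exact LinearMap.range_eq_top.1 htop

variable [CompleteSpace F]

theorem ContinuousLinearMap.isOpen_setOf_surjective :
    IsOpen {f : E →L[𝕜] F | Function.Surjective f} := by
  refine Metric.isOpen_iff.2 fun f hf => ?_
  obtain ⟨fsymm, hpos⟩ :=
    f.exists_nonlinearRightInverse_of_surjective (LinearMap.range_eq_top.2 hf)
  exact ⟨_, inv_pos.2 (NNReal.coe_pos.2 hpos), fun g hg =>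
    surjective_of_norm_sub_lt fsymm (by rwa [← dist_eq_norm])⟩

theorem isOpen_setOf_range_sup_eq_top (C : Submodule 𝕜 F) [CompleteSpace C] :
    IsOpen {A : E →L[𝕜] F | LinearMap.range (A : E →ₗ[𝕜] F) ⊔ C = ⊤} := by
  have hcont : Continuous fun A : E →L[𝕜] F => A.coprod C.subtypeL :=
    (ContinuousLinearMap.coprodEquivL (S := 𝕜)).continuous.comp
      (continuous_id.prodMk continuous_const)
  convert ContinuousLinearMap.isOpen_setOf_surjective.preimage hcont using 1
  ext A
  rw [Set.mem_preimage, Set.mem_ofPred_eq, Set.mem_ofPred_eq,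
    ← ContinuousLinearMap.coe_coe (A.coprod _), ← LinearMap.range_eq_top,
    ContinuousLinearMap.coe_coprod, LinearMap.range_coprod]
  simp

end Surjective

theorem IsCompact.exists_finiteDimensional_forall_range_sup_eq_top
    {𝕜 X E F : Type*} [NontriviallyNormedField 𝕜] [CompleteSpace 𝕜] [TopologicalSpace X]
    [NormedAddCommGroup E] [NormedSpace 𝕜 E] [CompleteSpace E]
    [NormedAddCommGroup F] [NormedSpace 𝕜 F] [CompleteSpace F]
    {K : Set X} (hK : IsCompact K) {T : X → E →L[𝕜] F} (hT : ContinuousOn T K)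
    (hloc : ∀ t ∈ K, ∃ C : Submodule 𝕜 F, FiniteDimensional 𝕜 C ∧
      LinearMap.range (T t : E →ₗ[𝕜] F) ⊔ C = ⊤) :
    ∃ C : Submodule 𝕜 F, FiniteDimensional 𝕜 C ∧
      ∀ t ∈ K, LinearMap.range (T t : E →ₗ[𝕜] F) ⊔ C = ⊤ := by
  choose! Cs hCs hsup using hloc
  have hnhds : ∀ t (ht : t ∈ K),
      T ⁻¹' {A : E →L[𝕜] F | LinearMap.range (A : E →ₗ[𝕜] F) ⊔ Cs t = ⊤} ∈ 𝓝[K] t := by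
    intro t ht
    have := hCs t ht
    have := FiniteDimensional.complete 𝕜 (Cs t)
    exact hT t ht ((isOpen_setOf_range_sup_eq_top (Cs t)).mem_nhds (hsup t ht))
  obtain ⟨ts, hcover⟩ := hK.elim_nhdsWithin_subcover' _ hnhds
  have : ∀ t : K, FiniteDimensional 𝕜 (Cs t) := fun t => hCs t t.2
  refine ⟨ts.sup fun t => Cs t, inferInstance, fun s hs => ?_⟩
  obtain ⟨t, hts, hst⟩ := Set.mem_iUnion₂.1 (hcover hs)
  exact eq_top_mono (sup_le_sup_left (Finset.le_sup (f := fun t : K => Cs t) hts) _) hst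

theorem Submodule.exists_projectionL_apply_eq_of_range_sup_eq_top
    {R M N : Type*} [Ring R] [AddCommGroup M] [Module R M] [AddCommGroup N] [Module R N]
    [TopologicalSpace N] {p q : Submodule R N} (h : IsTopCompl p q) (A : M →ₗ[R] N)
    (hA : LinearMap.range A ⊔ q = ⊤) {y : N} (hy : y ∈ p) :
    ∃ x : M, p.projectionL q h (A x) = y := by
  obtain ⟨_, ⟨x, rfl⟩, c, hc, hxc⟩ := Submodule.mem_sup.1 (hA ▸ Submodule.mem_top : y ∈ _)
  refine ⟨x, ?_⟩
  have := congrArg (p.projectionL q h) hxc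
  rwa [map_add, projectionL_apply_eq_zero_of_mem_right h hc, add_zero,
    projectionL_apply_left h ⟨y, hy⟩] at this

theorem common_stabilizing_projection_general
    (E F : Type*) [NormedAddCommGroup E] [NormedSpace ℝ E] [CompleteSpace E]
    [NormedAddCommGroup F] [NormedSpace ℝ F] [CompleteSpace F]
    (T : ℝ → (E →L[ℝ] F)) (hTcont : ContinuousOn T (Set.Icc 0 1))
    (hcoker : ∀ t ∈ Set.Icc (0 : ℝ) 1, ∃ Ct : Submodule ℝ F, FiniteDimensional ℝ Ct ∧
      IsCompl (LinearMap.range (T t : E →ₗ[ℝ] F)) Ct) :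
    ∃ (C R : Submodule ℝ F), FiniteDimensional ℝ C ∧ IsClosed (R : Set F) ∧ IsCompl C R ∧
      ∃ P : F →L[ℝ] F, (∀ x : F, P x ∈ R) ∧ (∀ x ∈ R, P x = x) ∧ (∀ x ∈ C, P x = 0) ∧
        ∀ t ∈ Set.Icc (0 : ℝ) 1, ∀ y ∈ R, ∃ x : E, P (T t x) = y := by
  obtain ⟨C, hC, hsup⟩ := isCompact_Icc.exists_finiteDimensional_forall_range_sup_eq_top hTcont
    fun t ht => (hcoker t ht).imp fun _ ⟨hfin, hcompl⟩ => ⟨hfin, hcompl.sup_eq_top⟩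
  obtain ⟨R, hCR⟩ := (Submodule.ClosedComplemented.of_finiteDimensional C).exists_isTopCompl
  have hRC := hCR.symm
  exact ⟨C, R, hC, hCR.isClosed', hCR.isCompl, R.projectionL C hRC,
    Submodule.projectionL_apply_mem hRC, fun x hx => Submodule.projectionL_apply_left hRC ⟨x, hx⟩,
    fun x hx => Submodule.projectionL_apply_eq_zero_of_mem_right hRC hx,
    fun t ht _ hy =>
      Submodule.exists_projectionL_apply_eq_of_range_sup_eq_top hRC _ (hsup t ht) hy⟩

/-- existence of a common stabilizing projection for a norm-continuous arc
of Fredholm operators (used in the construction of the determinant line bundle). -/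
theorem common_stabilizing_projection
    (E F : Type*) [NormedAddCommGroup E] [NormedSpace ℝ E] [CompleteSpace E]
    [NormedAddCommGroup F] [NormedSpace ℝ F] [CompleteSpace F]
    (T : ℝ → (E →L[ℝ] F)) (hTcont : ContinuousOn T (Set.Icc 0 1))
    (hker : ∀ t ∈ Set.Icc (0 : ℝ) 1, FiniteDimensional ℝ (LinearMap.ker (T t : E →ₗ[ℝ] F)))
    (hclosed : ∀ t ∈ Set.Icc (0 : ℝ) 1,
      IsClosed ((LinearMap.range (T t : E →ₗ[ℝ] F) : Submodule ℝ F) : Set F))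
    (hcoker : ∀ t ∈ Set.Icc (0 : ℝ) 1, ∃ Ct : Submodule ℝ F, FiniteDimensional ℝ Ct ∧
      IsCompl (LinearMap.range (T t : E →ₗ[ℝ] F)) Ct) :
    ∃ (C R : Submodule ℝ F), FiniteDimensional ℝ C ∧ IsClosed (R : Set F) ∧ IsCompl C R ∧
      ∃ P : F →L[ℝ] F, (∀ x : F, P x ∈ R) ∧ (∀ x ∈ R, P x = x) ∧ (∀ x ∈ C, P x = 0) ∧
        ∀ t ∈ Set.Icc (0 : ℝ) 1, ∀ y ∈ R, ∃ x : E, P (T t x) = y :=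
  common_stabilizing_projection_general E F T hTcont hcoker
end

section
/- Let N be a finite-dimensional linear subspace of E = ℝ^n × W which is in good position to the partial quadrant C = [0,∞)^n × W. Then C ∩ N is a partial quadrant in N: there exist an integer 0 ≤ k ≤ d = dim N and a linear isomorphism of N onto ℝ^d carrying C ∩ N onto [0,∞)^k × ℝ^{d−k}. (Proposition 5.2.) -/
/-!
Call a constraint `xᵢ ≥ 0` of `Q = C ∩ N` active if it vanishes at some nonzero point `w` of `Q`.
Good position forces every active coordinate to vanish on the good complement `N⊥`, since
`w ± m ∈ C` for all small `m ∈ N⊥`. The coordinates are jointly surjective on `E = N ⊕ N⊥`, so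
the active ones stay jointly surjective on `N`, and can be completed to linear coordinates of `N`.
If `dim N ≥ 2`, the active constraints alone cut out `Q`: join a point `x ∈ N \ Q` to a point of
`Q` off the line `ℝ x`; where the segment leaves `Q` it meets a nonzero point of `Q` at which a
constraint violated by `x` is active. If `dim N ≤ 1`, `Q` is `N` or a ray, since having interior
it spans `N`.
-/

open Module

def IsPartialQuadrant {V : Type*} [AddCommGroup V] [Module ℝ V] (Q : Set V) : Prop :=
  ∃ k : ℕ, k ≤ finrank ℝ V ∧ ∃ φ : V ≃ₗ[ℝ] (Fin (finrank ℝ V) → ℝ),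
    ∀ x, x ∈ Q ↔ ∀ i : Fin (finrank ℝ V), (i : ℕ) < k → 0 ≤ φ x i

section PartialQuadrant

variable {V : Type*} [AddCommGroup V] [Module ℝ V] [FiniteDimensional ℝ V]

theorem isPartialQuadrant_univ : IsPartialQuadrant (Set.univ : Set V) :=
  ⟨0, Nat.zero_le _, (finBasis ℝ V).equivFun, by simp⟩

theorem isPartialQuadrant_of_surjective {κ : Type*} [Fintype κ] (G : V →ₗ[ℝ] κ → ℝ)
    (hG : Function.Surjective G) {Q : Set V} (hQ : ∀ x, x ∈ Q ↔ ∀ j, 0 ≤ G x j) :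
    IsPartialQuadrant Q := by
  obtain ⟨K, hK⟩ := (LinearMap.ker G).exists_isCompl
  have hrange : LinearMap.range G = ⊤ := LinearMap.range_eq_top.2 hG
  have hdim : Fintype.card κ + finrank ℝ (LinearMap.ker G) = finrank ℝ V := by
    rw [← G.finrank_range_add_finrank_ker, hrange, finrank_top, finrank_fintype_fun_eq_card]
  let e : κ ⊕ Fin (finrank ℝ (LinearMap.ker G)) ≃ Fin (finrank ℝ V) :=
    ((Fintype.equivFin κ).sumCongr (Equiv.refl _)).trans (finSumFinEquiv.trans (finCongr hdim))
  let φ : V ≃ₗ[ℝ] (Fin (finrank ℝ V) → ℝ) :=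
    LinearMap.equivProdOfSurjectiveOfIsCompl G ((LinearMap.ker G).projectionOnto K hK) hrange
        (Submodule.range_projectionOnto hK) (by rwa [Submodule.ker_projectionOnto]) ≪≫ₗ
      (LinearEquiv.refl ℝ _).prodCongr (finBasis ℝ _).equivFun ≪≫ₗ
      (LinearEquiv.sumArrowLequivProdArrow _ _ ℝ ℝ).symm ≪≫ₗ LinearEquiv.funCongrLeft ℝ ℝ e.symm
  refine ⟨Fintype.card κ, hdim ▸ Nat.le_add_right _ _, φ, fun x => ?_⟩
  rw [hQ, ← e.forall_congr_right, Sum.forall]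
  simp [φ, e, LinearEquiv.funCongrLeft_apply]

end PartialQuadrant

section PolyhedralCone

variable {V ι : Type*} [AddCommGroup V] [Module ℝ V] (g : ι → V →ₗ[ℝ] ℝ)

theorem forall_nonneg_apply_smul {x : V} (hx : ∀ i, 0 ≤ g i x) {a : ℝ} (ha : 0 ≤ a) :
    ∀ i, 0 ≤ g i (a • x) := fun i => by
  simpa only [map_smul, smul_eq_mul] using mul_nonneg ha (hx i)

theorem isPartialQuadrant_of_finrank_le_one [FiniteDimensional ℝ V] (hV : finrank ℝ V ≤ 1)
    (hspan : Submodule.span ℝ {x | ∀ i, 0 ≤ g i x} = ⊤) :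
    IsPartialQuadrant {x | ∀ i, 0 ≤ g i x} := by
  set Q := {x | ∀ i, 0 ≤ g i x}
  by_cases hQ : Q = Set.univ
  · rw [hQ]; exact isPartialQuadrant_univ
  obtain ⟨x₀, hx₀⟩ := (Set.ne_univ_iff_exists_notMem Q).1 hQ
  obtain ⟨y, hyQ, hy⟩ : ∃ y ∈ Q, y ≠ 0 := by
    by_contra! h
    have hx₀0 : x₀ ∈ Submodule.span ℝ Q := hspan ▸ Submodule.mem_top
    rw [(Submodule.span_eq_bot.2 h), Submodule.mem_bot] at hx₀0
    exact hx₀ (hx₀0 ▸ fun i => (map_zero (g i)).ge)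
  have hsmul : ∀ x, ∃ a : ℝ, a • y = x := (finrank_eq_one_iff_of_nonzero' y hy).1
    (le_antisymm hV (finrank_pos_iff_exists_ne_zero.2 ⟨y, hy⟩))
  have hray : ∀ a : ℝ, a • y ∈ Q ↔ 0 ≤ a := by
    refine fun a => ⟨fun ha => ?_, forall_nonneg_apply_smul g hyQ⟩
    by_contra! ha0
    obtain ⟨b, rfl⟩ := hsmul x₀
    rcases le_or_gt 0 b with hb | hb
    · exact hx₀ (forall_nonneg_apply_smul g hyQ hb)
    · have := forall_nonneg_apply_smul g ha (div_nonneg_of_nonpos hb.le ha0.le)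
      rw [smul_smul, div_mul_cancel₀ _ ha0.ne] at this
      exact hx₀ this
  let e : ℝ ≃ₗ[ℝ] V := .ofBijective (LinearMap.toSpanSingleton ℝ V y)
    ⟨smul_left_injective ℝ hy, hsmul⟩
  refine isPartialQuadrant_of_surjective
    (e.symm ≪≫ₗ (LinearEquiv.funUnique Unit ℝ ℝ).symm).toLinearMap
    (LinearEquiv.surjective _) fun x => ?_
  obtain ⟨a, rfl⟩ := e.surjective x
  exact (hray a).trans (by simp)

theorem exists_segment_exit [Fintype ι] {x y : V} (hy : ∀ i, 0 ≤ g i y)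
    (hx : ∃ i, g i x < 0) :
    ∃ l, g l x < 0 ∧ ∃ t : ℝ, 0 ≤ t ∧ t < 1 ∧
      (∀ i, 0 ≤ g i ((1 - t) • y + t • x)) ∧ g l ((1 - t) • y + t • x) = 0 := by
  obtain ⟨i₀, hi₀⟩ := hx
  set B := Finset.univ.filter fun i => g i x < 0
  have hB : ∀ {i}, i ∈ B ↔ g i x < 0 := by simp [B]
  have hden : ∀ i ∈ B, 0 < g i y - g i x := fun i hi => by linarith [hB.1 hi, hy i]
  obtain ⟨l, hlB, hlmin⟩ := B.exists_min_image (fun i => g i y / (g i y - g i x))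
    ⟨i₀, hB.2 hi₀⟩
  set t := g l y / (g l y - g l x)
  have ht0 : 0 ≤ t := div_nonneg (hy l) (hden l hlB).le
  have ht1 : t < 1 := (div_lt_one (hden l hlB)).2 (by linarith [hB.1 hlB])
  have hcomb : ∀ i, g i ((1 - t) • y + t • x) = (1 - t) * g i y + t * g i x := fun i => by
    simp only [map_add, map_smul, smul_eq_mul]
  refine ⟨l, hB.1 hlB, t, ht0, ht1, fun i => ?_, ?_⟩
  · rw [hcomb]
    by_cases hi : i ∈ B
    · nlinarith [(le_div_iff₀ (hden i hi)).1 (hlmin i hi)]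
    · nlinarith [hy i, not_lt.1 (mt hB.2 hi)]
  · rw [hcomb, show (1 - t) * g l y + t * g l x = g l y - t * (g l y - g l x) by ring,
      div_mul_cancel₀ _ (hden l hlB).ne', sub_self]

def IsActiveConstraint (l : ι) : Prop :=
  ∃ w ≠ 0, (∀ i, 0 ≤ g i w) ∧ g l w = 0

theorem forall_nonneg_iff_isActiveConstraint [Fintype ι] [FiniteDimensional ℝ V]
    (hV : 1 < finrank ℝ V) (hspan : Submodule.span ℝ {x | ∀ i, 0 ≤ g i x} = ⊤) (x : V) :
    (∀ i, 0 ≤ g i x) ↔ ∀ l, IsActiveConstraint g l → 0 ≤ g l x := by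
  refine ⟨fun hx l _ => hx l, fun hact => ?_⟩
  by_contra! hx
  obtain ⟨y, hyQ, hyx⟩ : ∃ y, (∀ i, 0 ≤ g i y) ∧ y ∉ ℝ ∙ x := by
    by_contra! h
    have htop : ℝ ∙ x = ⊤ := top_le_iff.1 (hspan ▸ Submodule.span_le.2 fun y hy => h y hy)
    have := finrank_span_le_card (R := ℝ) ({x} : Set V)
    rw [htop, finrank_top, Set.toFinset_singleton, Finset.card_singleton] at this
    omega
  obtain ⟨l, hlx, t, ht0, ht1, hwQ, hwl⟩ := exists_segment_exit g hyQ hx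
  refine (hlx.not_ge (hact l ⟨_, fun hw0 => hyx ?_, hwQ, hwl⟩))
  have : (1 - t) • y ∈ ℝ ∙ x := by
    rw [eq_neg_of_add_eq_zero_left hw0]
    exact neg_mem (Submodule.smul_mem _ _ (Submodule.mem_span_singleton_self x))
  exact (Submodule.smul_mem_iff _ (by linarith)).1 this

end PolyhedralCone

theorem LinearMap.surjective_comp_subtype_of_le_ker {R E F : Type*} [Ring R] [AddCommGroup E]
    [Module R E] [AddCommGroup F] [Module R F] {f : E →ₗ[R] F} (hf : Function.Surjective f)
    {N N' : Submodule R E} (hsup : N ⊔ N' = ⊤) (hker : N' ≤ LinearMap.ker f) :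
    Function.Surjective (f.comp N.subtype) := by
  intro u
  obtain ⟨p, rfl⟩ := hf u
  obtain ⟨a, ha, b, hb, rfl⟩ := Submodule.mem_sup.1 (hsup ▸ Submodule.mem_top : p ∈ N ⊔ N')
  exact ⟨⟨a, ha⟩, by simp [LinearMap.mem_ker.1 (hker hb)]⟩

theorem Submodule.span_eq_top_of_ball_subset {V : Type*} [NormedAddCommGroup V]
    [NormedSpace ℝ V] {Q : Set V} {x : V} {ε : ℝ} (hε : 0 < ε) (h : Metric.ball x ε ⊆ Q) :
    Submodule.span ℝ Q = ⊤ := by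
  refine top_le_iff.1 fun v _ => Submodule.span_mono h (affineSpan_subset_span ?_)
  rw [Metric.isOpen_ball.affineSpan_eq_top (Metric.nonempty_ball.2 hε)]
  exact AffineSubspace.mem_top ℝ V v

section GoodPosition

variable {E ι : Type*} [NormedAddCommGroup E] [NormedSpace ℝ E] (ℓ : ι → E →ₗ[ℝ] ℝ)
  {N Nperp : Submodule ℝ E} {c : ℝ}

theorem apply_eq_zero_of_isActiveConstraint (hc : 0 < c)
    (hgood : ∀ v ∈ N, ∀ m ∈ Nperp, ‖m‖ ≤ c * ‖v‖ → (∀ i, 0 ≤ ℓ i v) → ∀ i, 0 ≤ ℓ i (v + m))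
    {l : ι} (hl : IsActiveConstraint (fun i => (ℓ i).comp N.subtype) l) {m : E}
    (hm : m ∈ Nperp) : ℓ l m = 0 := by
  obtain ⟨w, hw0, hwQ, hwl⟩ := hl
  rcases eq_or_ne m 0 with rfl | hm0
  · exact map_zero _
  set s := c * ‖(w : E)‖ / ‖m‖
  have hs : 0 < s := div_pos (mul_pos hc (norm_pos_iff.2 (by simpa using hw0)))
    (norm_pos_iff.2 hm0)
  have hsign : ∀ σ : ℝ, |σ| = s → 0 ≤ σ * ℓ l m := fun σ hσ => by
    have hnorm : ‖σ • m‖ ≤ c * ‖(w : E)‖ := by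
      rw [norm_smul, Real.norm_eq_abs, hσ, div_mul_cancel₀ _ (norm_ne_zero_iff.2 hm0)]
    have := hgood w w.2 (σ • m) (Nperp.smul_mem σ hm) hnorm hwQ l
    simpa [show ℓ l w = 0 from hwl] using this
  nlinarith [hsign s (abs_of_pos hs), hsign (-s) (by rw [abs_neg, abs_of_pos hs])]

theorem isPartialQuadrant_of_goodPosition [Fintype ι] [FiniteDimensional ℝ N]
    (hℓ : Function.Surjective (LinearMap.pi ℓ)) (hsup : N ⊔ Nperp = ⊤) (hc : 0 < c)
    (hgood : ∀ v ∈ N, ∀ m ∈ Nperp, ‖m‖ ≤ c * ‖v‖ → (∀ i, 0 ≤ ℓ i v) → ∀ i, 0 ≤ ℓ i (v + m))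
    (hspan : Submodule.span ℝ {x : N | ∀ i, 0 ≤ ℓ i x} = ⊤) :
    IsPartialQuadrant {x : N | ∀ i, 0 ≤ ℓ i x} := by
  classical
  set g := fun i => (ℓ i).comp N.subtype
  rcases le_or_gt (finrank ℝ N) 1 with hN | hN
  · exact isPartialQuadrant_of_finrank_le_one g hN hspan
  let G := (LinearMap.funLeft ℝ ℝ (Subtype.val : {l // IsActiveConstraint g l} → ι)).comp
    (LinearMap.pi ℓ)
  refine isPartialQuadrant_of_surjective (G.comp N.subtype) ?_ fun x => ?_
  · have hG : Function.Surjective G := by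
      rw [LinearMap.coe_comp]
      exact (LinearMap.funLeft_surjective_of_injective ℝ ℝ _ Subtype.val_injective).comp hℓ
    refine LinearMap.surjective_comp_subtype_of_le_ker hG hsup fun m hm => ?_
    ext ⟨l, hl⟩
    exact apply_eq_zero_of_isActiveConstraint ℓ hc hgood hl hm
  · exact (forall_nonneg_iff_isActiveConstraint g hN hspan x).trans
      ⟨fun h l => h l l.2, fun h l hl => h ⟨l, hl⟩⟩

end GoodPosition

theorem good_position_partial_quadrant_general
    (n : ℕ) (W : Type*) [NormedAddCommGroup W] [NormedSpace ℝ W]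
    (C : Set ((Fin n → ℝ) × W)) (hC : C = {p : (Fin n → ℝ) × W | ∀ i : Fin n, 0 ≤ p.1 i})
    (N : Submodule ℝ ((Fin n → ℝ) × W)) [FiniteDimensional ℝ N]
    -- N ∩ C has nonempty interior in N
    (hint : ∃ x, x ∈ N ∧ x ∈ C ∧ ∃ ε > 0, ∀ y ∈ N, ‖y - x‖ < ε → y ∈ C)
    -- a good complement N⊥ with constant c
    (Nperp : Submodule ℝ ((Fin n → ℝ) × W))
    (hcompl : IsCompl N Nperp)
    (c : ℝ) (hc : 0 < c)
    (hgood : ∀ v ∈ N, ∀ m ∈ Nperp, ‖m‖ ≤ c * ‖v‖ → ((v + m ∈ C) ↔ v ∈ C)) :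
    -- C ∩ N is a partial quadrant in N
    ∃ k : ℕ, k ≤ Module.finrank ℝ N ∧
      ∃ φ : N ≃ₗ[ℝ] (Fin (Module.finrank ℝ N) → ℝ),
        ∀ x : N, (x : (Fin n → ℝ) × W) ∈ C ↔
          ∀ i : Fin (Module.finrank ℝ N), (i : ℕ) < k → 0 ≤ φ x i := by
  subst hC
  obtain ⟨x₀, hx₀, -, ε, hε, hball⟩ := hint
  let ℓ : Fin n → (Fin n → ℝ) × W →ₗ[ℝ] ℝ := fun i =>
    (LinearMap.proj i).comp (LinearMap.fst ℝ (Fin n → ℝ) W)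
  exact isPartialQuadrant_of_goodPosition ℓ (fun u => ⟨(u, 0), rfl⟩) hcompl.sup_eq_top hc
    (fun v hv m hm h => (hgood v hv m hm h).2)
    (Submodule.span_eq_top_of_ball_subset (x := ⟨x₀, hx₀⟩) hε fun y hy =>
      hball y y.2 (mem_ball_iff_norm.1 hy))

/-- Proposition 5.2: if a finite-dimensional subspace `N` of
`E = ℝ^n × W` is in good position to the partial quadrant `C = [0,∞)^n × W`, then
`C ∩ N` is a partial quadrant in `N`. -/
theorem good_position_partial_quadrant
    (n : ℕ) (W : Type*) [NormedAddCommGroup W] [NormedSpace ℝ W] [CompleteSpace W]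
    (C : Set ((Fin n → ℝ) × W)) (hC : C = {p : (Fin n → ℝ) × W | ∀ i : Fin n, 0 ≤ p.1 i})
    (N : Submodule ℝ ((Fin n → ℝ) × W)) [FiniteDimensional ℝ N]
    -- N ∩ C has nonempty interior in N
    (hint : ∃ x, x ∈ N ∧ x ∈ C ∧ ∃ ε > 0, ∀ y ∈ N, ‖y - x‖ < ε → y ∈ C)
    -- a good complement N⊥ with constant c
    (Nperp : Submodule ℝ ((Fin n → ℝ) × W))
    (hclosed : IsClosed (Nperp : Set ((Fin n → ℝ) × W)))
    (hcompl : IsCompl N Nperp)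
    (c : ℝ) (hc : 0 < c)
    (hgood : ∀ v ∈ N, ∀ m ∈ Nperp, ‖m‖ ≤ c * ‖v‖ → ((v + m ∈ C) ↔ v ∈ C)) :
    -- C ∩ N is a partial quadrant in N
    ∃ k : ℕ, k ≤ Module.finrank ℝ N ∧
      ∃ φ : N ≃ₗ[ℝ] (Fin (Module.finrank ℝ N) → ℝ),
        ∀ x : N, (x : (Fin n → ℝ) × W) ∈ C ↔
          ∀ i : Fin (Module.finrank ℝ N), (i : ℕ) < k → 0 ≤ φ x i :=
  good_position_partial_quadrant_general n W C hC N hint Nperp hcompl c hc hgood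
end

section
/- Let N be a finite-dimensional linear subspace of E = ℝ^n × W admitting a closed linear subspace N⊥ with E = N ⊕ N⊥ (a topological direct sum) and N⊥ ⊆ C, i.e. N is neat with respect to the partial quadrant C = [0,∞)^n × W. Then N is in good position to C: N ∩ C has nonempty interior in N, and for all n ∈ N, m ∈ N⊥ with ‖m‖ ≤ ‖n‖ one has n + m ∈ C if and only if n ∈ C (so N⊥ is a good complement with constant c = 1); moreover C ∩ N is a partial quadrant in N. (Proposition 5.3.) -/
/-!
A subspace contained in `C` contains `-m` with every `m`, so its `ℝ^n`-component vanishes: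
neatness puts `N⊥` inside `0 × W`. Membership in `C` only depends on the `ℝ^n`-component, so
adding an element of `N⊥` never changes it, whatever the norms. Since `E = N + N⊥`, the projection
`N → ℝ^n` is still surjective; its coordinates extend to coordinates on `N` in which `C ∩ N` is
`[0,∞)^n × ℝ^(d-n)`, and a point of `N` over `(1, …, 1)` is interior to `C ∩ N`.
-/

open Module LinearMap

theorem LinearMap.le_ker_of_forall_nonneg {R M G : Type*} [Ring R] [AddCommGroup M] [Module R M]
    [AddCommGroup G] [PartialOrder G] [IsOrderedAddMonoid G] [Module R G]
    (f : M →ₗ[R] G) {P : Submodule R M} (hP : ∀ m ∈ P, 0 ≤ f m) : P ≤ ker f := fun m hm =>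
  le_antisymm (by simpa using hP (-m) (P.neg_mem hm)) (hP m hm)

theorem Submodule.map_eq_range_of_codisjoint_of_le_ker {R M M₂ : Type*} [Semiring R]
    [AddCommMonoid M] [Module R M] [AddCommMonoid M₂] [Module R M₂] (f : M →ₗ[R] M₂)
    {N P : Submodule R M} (hNP : Codisjoint N P) (hP : P ≤ ker f) : N.map f = range f := by
  rw [range_eq_map, ← hNP.eq_top, Submodule.map_sup, le_ker_iff_map.mp hP, sup_bot_eq]

theorem LinearMap.exists_linearEquiv_fin_castLE_eq_of_surjective {K N : Type*} [Field K] [AddCommGroup N]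
    [Module K N] [FiniteDimensional K N] {n : ℕ} (p : N →ₗ[K] (Fin n → K))
    (hp : Function.Surjective p) :
    ∃ hn : n ≤ finrank K N, ∃ φ : N ≃ₗ[K] (Fin (finrank K N) → K),
      ∀ x i, φ x (Fin.castLE hn i) = p x i := by
  obtain ⟨Q, hQ⟩ := (ker p).exists_isCompl
  let e : N ≃ₗ[K] (Fin n → K) × (Fin (finrank K (ker p)) → K) :=
    (p.equivProdOfSurjectiveOfIsCompl ((ker p).projectionOnto Q hQ) (range_eq_top.mpr hp)
      (Submodule.range_projectionOnto hQ) (by rwa [Submodule.ker_projectionOnto])).trans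
      ((LinearEquiv.refl K _).prodCongr (finBasis K (ker p)).equivFun)
  have hdim : finrank K N = n + finrank K (ker p) := by simp [e.finrank_eq]
  have hn : n ≤ finrank K N := hdim ▸ Nat.le_add_right _ _
  refine ⟨hn,
    e.trans ((LinearEquiv.sumArrowLequivProdArrow _ _ K K).symm.trans
      (LinearEquiv.funCongrLeft K K ((finCongr hdim).trans finSumFinEquiv.symm))), fun x i => ?_⟩
  have : finCongr hdim (Fin.castLE hn i) = Fin.castAdd _ i := rfl
  simp [LinearEquiv.funCongrLeft_apply, this, e]

theorem nonneg_of_dist_one_lt_one {ι : Type*} [Fintype ι] {x : ι → ℝ} (hx : dist x 1 < 1)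
    (i : ι) : 0 ≤ x i := by
  have := (dist_le_pi_dist x 1 i).trans_lt hx
  rw [Pi.one_apply, Real.dist_eq, abs_lt] at this
  linarith [this.1]

theorem neat_implies_good_position_general
    (n : ℕ) (W : Type*) [NormedAddCommGroup W] [NormedSpace ℝ W]
    (C : Set ((Fin n → ℝ) × W)) (hC : C = {p : (Fin n → ℝ) × W | ∀ i : Fin n, 0 ≤ p.1 i})
    (N Nperp : Submodule ℝ ((Fin n → ℝ) × W)) [FiniteDimensional ℝ N]
    (hcompl : IsCompl N Nperp)
    -- neatness: N⊥ ⊆ C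
    (hneat : (Nperp : Set ((Fin n → ℝ) × W)) ⊆ C) :
    -- N ∩ C has nonempty interior in N
    (∃ x, x ∈ N ∧ x ∈ C ∧ ∃ ε > 0, ∀ y ∈ N, ‖y - x‖ < ε → y ∈ C) ∧
    -- N⊥ is a good complement with constant c = 1
    (∀ v ∈ N, ∀ m ∈ Nperp, ‖m‖ ≤ ‖v‖ → ((v + m ∈ C) ↔ v ∈ C)) ∧
    -- C ∩ N is a partial quadrant in N
    (∃ k : ℕ, k ≤ Module.finrank ℝ N ∧
      ∃ φ : N ≃ₗ[ℝ] (Fin (Module.finrank ℝ N) → ℝ),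
        ∀ x : N, (x : (Fin n → ℝ) × W) ∈ C ↔
          ∀ i : Fin (Module.finrank ℝ N), (i : ℕ) < k → 0 ≤ φ x i) := by
  subst hC
  let π := LinearMap.fst ℝ (Fin n → ℝ) W
  have hperp : Nperp ≤ ker π := π.le_ker_of_forall_nonneg fun m hm => hneat hm
  have hsurj : Function.Surjective (π ∘ₗ N.subtype) := by
    rw [← range_eq_top, range_comp, Submodule.range_subtype,
      N.map_eq_range_of_codisjoint_of_le_ker π hcompl.codisjoint hperp, Submodule.range_fst]
  refine ⟨?_, ?_, ?_⟩
  · obtain ⟨a, ha⟩ := hsurj 1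
    replace ha : (a : (Fin n → ℝ) × W).1 = 1 := ha
    refine ⟨a, a.2, fun i => by simp [ha], 1, one_pos, fun y _ hy i => ?_⟩
    refine nonneg_of_dist_one_lt_one ?_ i
    rw [← dist_eq_norm, Prod.dist_eq, ha] at hy
    exact (le_max_left _ _).trans_lt hy
  · intro v _ m hm _
    have hm1 : m.1 = 0 := hperp hm
    simp only [Set.mem_ofPred_eq, Prod.fst_add, hm1, add_zero]
  · obtain ⟨hn, φ, hφ⟩ := (π ∘ₗ N.subtype).exists_linearEquiv_fin_castLE_eq_of_surjective hsurj
    refine ⟨n, hn, φ, fun x => ⟨fun hx i hi => ?_, fun hx i => ?_⟩⟩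
    · rw [show i = Fin.castLE hn ⟨i, hi⟩ from rfl, hφ]
      exact hx ⟨i, hi⟩
    · have := hx (Fin.castLE hn i) i.2
      rwa [hφ] at this

/-- Proposition 5.3: a neat finite-dimensional subspace is in good position
to the partial quadrant `C = [0,∞)^n × W`, with good complement constant `c = 1`, and
`C ∩ N` is a partial quadrant in `N`. -/
theorem neat_implies_good_position
    (n : ℕ) (W : Type*) [NormedAddCommGroup W] [NormedSpace ℝ W] [CompleteSpace W]
    (C : Set ((Fin n → ℝ) × W)) (hC : C = {p : (Fin n → ℝ) × W | ∀ i : Fin n, 0 ≤ p.1 i})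
    (N Nperp : Submodule ℝ ((Fin n → ℝ) × W)) [FiniteDimensional ℝ N]
    (hclosed : IsClosed (Nperp : Set ((Fin n → ℝ) × W)))
    (hcompl : IsCompl N Nperp)
    -- neatness: N⊥ ⊆ C
    (hneat : (Nperp : Set ((Fin n → ℝ) × W)) ⊆ C) :
    -- N ∩ C has nonempty interior in N
    (∃ x, x ∈ N ∧ x ∈ C ∧ ∃ ε > 0, ∀ y ∈ N, ‖y - x‖ < ε → y ∈ C) ∧
    -- N⊥ is a good complement with constant c = 1
    (∀ v ∈ N, ∀ m ∈ Nperp, ‖m‖ ≤ ‖v‖ → ((v + m ∈ C) ↔ v ∈ C)) ∧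
    -- C ∩ N is a partial quadrant in N
    (∃ k : ℕ, k ≤ Module.finrank ℝ N ∧
      ∃ φ : N ≃ₗ[ℝ] (Fin (Module.finrank ℝ N) → ℝ),
        ∀ x : N, (x : (Fin n → ℝ) × W) ∈ C ↔
          ∀ i : Fin (Module.finrank ℝ N), (i : ℕ) < k → 0 ≤ φ x i) :=
  neat_implies_good_position_general n W C hC N Nperp hcompl hneat
end

section
/- Let P be a closed convex cone in a finite-dimensional real normed vector space N, with P ≠ {0}. Then P is the closed convex hull of the union of its extreme rays. (Lemma 5.4, a cone version of the Krein–Milman theorem.) -/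
/-!
A salient closed cone has a continuous functional `f` with `f x ≥ c ‖x‖` on it: separate each
point of the compact set `P ∩ sphere 0 1` from `P` by Hahn–Banach and sum finitely many of the
separating functionals. Then `B = P ∩ f⁻¹{1}` is a compact convex base of `P`, so by Krein–Milman
it is the closed convex hull of its extreme points. Each extreme point of `B` spans an extreme ray
of `P`, and every `x ∈ P \ {0}` is `f x • b` for some `b ∈ B`.
-/

open Pointwise

/-- An extreme ray of a cone `P`: the ray `[0,∞)·x` generated by a nonzero `x ∈ P` such that
every `y ∈ P` with `x - y ∈ P` belongs to the ray. -/
def IsExtremeRay {N : Type*} [AddCommGroup N] [Module ℝ N] (P R : Set N) : Prop :=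
  ∃ x, x ∈ P ∧ x ≠ 0 ∧ R = {y | ∃ t : ℝ, 0 ≤ t ∧ y = t • x} ∧
    ∀ y ∈ P, x - y ∈ P → y ∈ R

open Set

section Cone

variable {N : Type*} [AddCommGroup N] [Module ℝ N] {P : Set N}

lemma Convex.add_mem_of_smul_mem (hconv : Convex ℝ P)
    (hcone : ∀ t : ℝ, 0 ≤ t → ∀ x ∈ P, t • x ∈ P) {x y : N} (hx : x ∈ P) (hy : y ∈ P) :
    x + y ∈ P := by
  have hmid := hconv hx hy (by norm_num : (0 : ℝ) ≤ 1 / 2) (by norm_num : (0 : ℝ) ≤ 1 / 2)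
    (by norm_num)
  simpa [smul_add, smul_smul] using hcone 2 (by norm_num) _ hmid

def Convex.toProperCone [TopologicalSpace N] (hconv : Convex ℝ P) (hclosed : IsClosed P)
    (h0 : (0 : N) ∈ P) (hcone : ∀ t : ℝ, 0 ≤ t → ∀ x ∈ P, t • x ∈ P) : ProperCone ℝ N where
  carrier := P
  add_mem' := hconv.add_mem_of_smul_mem hcone
  zero_mem' := h0
  smul_mem' c x hx := hcone c c.2 x hx
  isClosed' := hclosed

def extremeRaysUnion (P : Set N) : Set N := {y | ∃ R : Set N, IsExtremeRay P R ∧ y ∈ R}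

lemma extremeRaysUnion_subset (hcone : ∀ t : ℝ, 0 ≤ t → ∀ x ∈ P, t • x ∈ P) :
    extremeRaysUnion P ⊆ P := by
  rintro _ ⟨R, ⟨x, hxP, -, rfl, -⟩, t, ht, rfl⟩
  exact hcone t ht x hxP

lemma smul_mem_extremeRaysUnion {t : ℝ} (ht : 0 ≤ t) {y : N} (hy : y ∈ extremeRaysUnion P) :
    t • y ∈ extremeRaysUnion P := by
  obtain ⟨R, ⟨x, hxP, hx0, rfl, hext⟩, s, hs, rfl⟩ := hy
  exact ⟨_, ⟨x, hxP, hx0, rfl, hext⟩, t * s, mul_nonneg ht hs, smul_smul t s x⟩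

lemma inv_smul_mem_inter_preimage_one (hcone : ∀ t : ℝ, 0 ≤ t → ∀ x ∈ P, t • x ∈ P)
    (f : N →ₗ[ℝ] ℝ) {x : N} (hx : x ∈ P) (hfx : 0 < f x) : (f x)⁻¹ • x ∈ P ∩ f ⁻¹' {1} :=
  ⟨hcone _ (inv_nonneg.2 hfx.le) x hx, by simp [hfx.ne']⟩

lemma isExtremeRay_of_mem_extremePoints (hcone : ∀ t : ℝ, 0 ≤ t → ∀ x ∈ P, t • x ∈ P)
    (f : N →ₗ[ℝ] ℝ) (hf : ∀ x ∈ P, x ≠ 0 → 0 < f x) {x : N}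
    (hx : x ∈ (P ∩ f ⁻¹' {1}).extremePoints ℝ) :
    IsExtremeRay P {y | ∃ t : ℝ, 0 ≤ t ∧ y = t • x} := by
  obtain ⟨⟨hxP, hfx⟩, hxext⟩ := mem_extremePoints.1 hx
  refine ⟨x, hxP, ?_, rfl, fun y hy hxy => ?_⟩
  · rintro rfl
    simp at hfx
  rcases eq_or_ne y 0 with rfl | hy0
  · exact ⟨0, le_rfl, (zero_smul ℝ x).symm⟩
  rcases eq_or_ne (x - y) 0 with hxy0 | hxy0
  · exact ⟨1, zero_le_one, by rw [one_smul, sub_eq_zero.1 hxy0]⟩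
  have hfy := hf y hy hy0
  have hfxy := hf _ hxy hxy0
  have hseg : x ∈ openSegment ℝ ((f y)⁻¹ • y) ((f (x - y))⁻¹ • (x - y)) :=
    ⟨f y, f (x - y), hfy, hfxy, by rw [map_sub, add_sub_cancel]; exact hfx,
      by rw [smul_inv_smul₀ hfy.ne', smul_inv_smul₀ hfxy.ne', add_sub_cancel]⟩
  obtain ⟨hyx, -⟩ := hxext _ (inv_smul_mem_inter_preimage_one hcone f hy hfy) _
    (inv_smul_mem_inter_preimage_one hcone f hxy hfxy) hseg
  exact ⟨f y, hfy.le, by rw [← hyx, smul_inv_smul₀ hfy.ne']⟩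

lemma subset_of_inter_preimage_one_subset (hcone : ∀ t : ℝ, 0 ≤ t → ∀ x ∈ P, t • x ∈ P)
    (f : N →ₗ[ℝ] ℝ) (hf : ∀ x ∈ P, x ≠ 0 → 0 < f x) {Q : Set N}
    (hQ : ∀ t : ℝ, 0 ≤ t → ∀ y ∈ Q, t • y ∈ Q) (hne : ∃ x ∈ P, x ≠ 0)
    (hbase : P ∩ f ⁻¹' {1} ⊆ Q) : P ⊆ Q := by
  have hPQ : ∀ x ∈ P, x ≠ 0 → x ∈ Q := fun x hx hx0 => by
    have hfx := hf x hx hx0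
    simpa [smul_inv_smul₀ hfx.ne'] using
      hQ (f x) hfx.le _ (hbase (inv_smul_mem_inter_preimage_one hcone f hx hfx))
  intro x hx
  rcases eq_or_ne x 0 with rfl | hx0
  · obtain ⟨y, hy, hy0⟩ := hne
    simpa using hQ 0 le_rfl y (hPQ y hy hy0)
  · exact hPQ x hx hx0

end Cone

lemma smul_mem_closure_convexHull {E : Type*} [AddCommGroup E] [Module ℝ E] [TopologicalSpace E]
    [T1Space E] [ContinuousConstSMul ℝ E] {S : Set E} (hS : ∀ t : ℝ, 0 ≤ t → ∀ y ∈ S, t • y ∈ S)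
    {t : ℝ} (ht : 0 ≤ t) {y : E} (hy : y ∈ closure (convexHull ℝ S)) :
    t • y ∈ closure (convexHull ℝ S) := by
  have hsub : t • closure (convexHull ℝ S) ⊆ closure (convexHull ℝ S) := by
    rw [← closure_smul₀, ← convexHull_smul]
    exact closure_mono (convexHull_mono (by rintro _ ⟨z, hz, rfl⟩; exact hS t ht z hz))
  exact hsub (smul_mem_smul_set hy)

section Normed

variable {N : Type*} [NormedAddCommGroup N] [NormedSpace ℝ N] [ProperSpace N]

theorem ProperCone.exists_pos_on_sphere (C : ProperCone ℝ N)
    (hC : (C.toPointedCone : ConvexCone ℝ N).Salient) :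
    ∃ f : StrongDual ℝ N, ∀ x ∈ (C : Set N) ∩ Metric.sphere 0 1, 0 < f x := by
  set K := (C : Set N) ∩ Metric.sphere 0 1
  have hsep : ∀ x ∈ K, ∃ g : StrongDual ℝ N, (∀ y ∈ C, 0 ≤ g y) ∧ 0 < g x := by
    rintro x ⟨hxC, hx1⟩
    have hx0 : x ≠ 0 := ne_zero_of_mem_unit_sphere ⟨x, hx1⟩
    obtain ⟨g, hgC, hgx⟩ := C.hyperplane_separation_point (hC x hxC hx0)
    exact ⟨g, hgC, by simpa using hgx⟩
  choose g hgC hgx using hsep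
  have hK : IsCompact K := (isCompact_sphere 0 1).inter_left C.isClosed
  obtain ⟨t, ht⟩ := hK.elim_finite_subcover (fun x : K => {y | 0 < g x x.2 y})
    (fun x => isOpen_lt continuous_const (g x x.2).continuous)
    (fun x hx => mem_iUnion.2 ⟨⟨x, hx⟩, hgx x hx⟩)
  refine ⟨∑ x ∈ t, g x x.2, fun y hy => ?_⟩
  obtain ⟨x, hxt, hxy⟩ := mem_iUnion₂.1 (ht hy)
  simpa using Finset.sum_pos' (f := fun x : K => g x x.2 y) (fun x _ => hgC x x.2 y hy.1)
    ⟨x, hxt, hxy⟩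

theorem exists_pos_mul_norm_le_of_pos_on_sphere {P : Set N} (hPclosed : IsClosed P)
    (hPcone : ∀ t : ℝ, 0 ≤ t → ∀ x ∈ P, t • x ∈ P) (f : StrongDual ℝ N)
    (hf : ∀ x ∈ P ∩ Metric.sphere 0 1, 0 < f x) :
    ∃ c > 0, ∀ x ∈ P, c * ‖x‖ ≤ f x := by
  obtain ⟨c, hc, hcf⟩ := ((isCompact_sphere 0 1).inter_left hPclosed).exists_forall_le'
    f.continuous.continuousOn hf
  refine ⟨c, hc, fun x hx => ?_⟩
  rcases eq_or_ne x 0 with rfl | hx0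
  · simp
  have hnx : 0 < ‖x‖ := norm_pos_iff.2 hx0
  have hu := hcf (‖x‖⁻¹ • x) ⟨hPcone _ (inv_nonneg.2 hnx.le) x hx, by simp [norm_smul, hnx.ne']⟩
  rw [map_smul, smul_eq_mul] at hu
  rwa [← le_inv_mul_iff₀' hnx]

theorem isCompact_inter_preimage_one {P : Set N} (hPclosed : IsClosed P) (f : StrongDual ℝ N)
    {c : ℝ} (hc : 0 < c) (hf : ∀ x ∈ P, c * ‖x‖ ≤ f x) : IsCompact (P ∩ f ⁻¹' {1}) := by
  refine Metric.isCompact_of_isClosed_isBounded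
    (hPclosed.inter (isClosed_singleton.preimage f.continuous)) ?_
  refine (isBounded_iff_forall_norm_le).2 ⟨c⁻¹, fun x ⟨hxP, hx1⟩ => ?_⟩
  rw [← mul_one c⁻¹, le_inv_mul_iff₀ hc]
  exact (hf x hxP).trans_eq hx1

end Normed

/-- Lemma 5.4, a cone version of the Krein–Milman theorem: a closed convex
cone `P ≠ {0}` in a finite-dimensional real normed space is the closed convex hull of the
union of its extreme rays. -/
theorem cone_krein_milman
    (N : Type*) [NormedAddCommGroup N] [NormedSpace ℝ N] [FiniteDimensional ℝ N]
    (P : Set N) (hPclosed : IsClosed P) (hPconv : Convex ℝ P)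
    (hPcone : ∀ t : ℝ, 0 ≤ t → ∀ x ∈ P, t • x ∈ P)
    (hPpointed : P ∩ (-P) = {0})
    (hPne : P ≠ {0}) :
    P = closure (convexHull ℝ {y | ∃ R : Set N, IsExtremeRay P R ∧ y ∈ R}) := by
  have h0 : (0 : N) ∈ P := (hPpointed.symm ▸ mem_singleton 0 : (0 : N) ∈ P ∩ -P).1
  have hne : ∃ x ∈ P, x ≠ 0 := by
    by_contra! h
    exact hPne (eq_singleton_iff_unique_mem.2 ⟨h0, h⟩)
  let C := hPconv.toProperCone hPclosed h0 hPcone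
  obtain ⟨f, hf⟩ := C.exists_pos_on_sphere
    ((PointedCone.salient_iff_inter_neg_eq_singleton _).2 hPpointed)
  obtain ⟨c, hc, hcf⟩ := exists_pos_mul_norm_le_of_pos_on_sphere hPclosed hPcone f hf
  have hfpos : ∀ x ∈ P, x ≠ 0 → 0 < f x := fun x hx hx0 =>
    (mul_pos hc (norm_pos_iff.2 hx0)).trans_le (hcf x hx)
  have hKM := closure_convexHull_extremePoints (isCompact_inter_preimage_one hPclosed f hc hcf)
    (hPconv.inter ((convex_singleton 1).linear_preimage (f : N →ₗ[ℝ] ℝ)))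
  have hext : P ∩ f ⁻¹' {1} ⊆ closure (convexHull ℝ (extremeRaysUnion P)) := by
    rw [← hKM]
    refine closure_mono (convexHull_mono fun x hx => ?_)
    exact ⟨_, isExtremeRay_of_mem_extremePoints hPcone f hfpos hx, 1, zero_le_one,
      (one_smul ℝ x).symm⟩
  refine subset_antisymm ?_
    (closure_minimal (convexHull_min (extremeRaysUnion_subset hPcone) hPconv) hPclosed)
  exact subset_of_inter_preimage_one_subset hPcone (f : N →ₗ[ℝ] ℝ) hfpos
    (fun t ht y => smul_mem_closure_convexHull (fun _ => smul_mem_extremeRaysUnion) ht) hne hext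
end

section
/- Let N be a finite-dimensional real vector space of dimension d and let P ⊆ N be a closed convex cone with nonempty interior. Then there exists a linear isomorphism of N onto ℝ^d mapping P onto the quadrant [0,∞)^d if and only if P has exactly d extreme rays. (Lemma 5.5.) -/
/-!
The coordinate half-axes are the extreme rays of the quadrant, and a linear isomorphism carries
extreme rays to extreme rays; this gives one direction.

Conversely, a closed pointed cone `P` in finite dimension has a linear functional `f` that is
positive on `P ∖ {0}`: for `x ∈ P` of norm one, separating `-x ∉ P` from `P` gives a functional
nonnegative on `P` and positive at `x`, and by compactness a finite sum of these is positive on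
the whole unit sphere of `P`. The base `B = P ∩ {f = 1}` is then compact, and distinct extreme
points of `B` span distinct extreme rays of `P`, so `B` has at most `d` extreme points. By Krein–Milman they generate `P`, and since `P`
has interior they span `N`; so they form a basis in which `P` is the nonnegative quadrant.
-/

open Pointwise

open Set

section Rays

variable {N M : Type*} [AddCommGroup N] [Module ℝ N] [AddCommGroup M] [Module ℝ M]

def ray (x : N) : Set N := {y | ∃ t : ℝ, 0 ≤ t ∧ y = t • x}

theorem self_mem_ray (x : N) : x ∈ ray x := ⟨1, zero_le_one, (one_smul ℝ x).symm⟩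

theorem ray_smul_of_pos {c : ℝ} (hc : 0 < c) (x : N) : ray (c • x) = ray x := by
  ext y
  constructor
  · rintro ⟨t, ht, rfl⟩
    exact ⟨t * c, by positivity, by rw [smul_smul]⟩
  · rintro ⟨t, ht, rfl⟩
    exact ⟨t / c, by positivity, by rw [smul_smul, div_mul_cancel₀ _ hc.ne']⟩

theorem image_ray (φ : N →ₗ[ℝ] M) (x : N) : φ '' ray x = ray (φ x) := by
  ext y
  constructor
  · rintro ⟨_, ⟨t, ht, rfl⟩, rfl⟩
    exact ⟨t, ht, φ.map_smul t x⟩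
  · rintro ⟨t, ht, rfl⟩
    exact ⟨t • x, ⟨t, ht, rfl⟩, φ.map_smul t x⟩

theorem IsExtremeRay.image {P R : Set N} (φ : N ≃ₗ[ℝ] M) (h : IsExtremeRay P R) :
    IsExtremeRay (φ '' P) (φ '' R) := by
  obtain ⟨x, hxP, hx0, rfl, hext⟩ := h
  refine ⟨φ x, mem_image_of_mem φ hxP, by simpa using hx0, image_ray φ.toLinearMap x, ?_⟩
  rintro _ ⟨y, hyP, rfl⟩ ⟨z, hzP, hz⟩
  have hxy : x - y = z := φ.injective (by rw [hz, map_sub])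
  exact mem_image_of_mem φ (hext y hyP (hxy ▸ hzP))

theorem ncard_setOf_isExtremeRay_image (P : Set N) (φ : N ≃ₗ[ℝ] M) :
    {S | IsExtremeRay (φ '' P) S}.ncard = {R | IsExtremeRay P R}.ncard := by
  have hrays : {S | IsExtremeRay (φ '' P) S} = image φ '' {R | IsExtremeRay P R} := by
    refine Subset.antisymm (fun S hS => ⟨φ.symm '' S, ?_, ?_⟩) ?_
    · simpa [image_image] using hS.image φ.symm
    · simp [image_image]
    · rintro _ ⟨R, hR, rfl⟩
      exact hR.image φ
  rw [hrays, ncard_image_of_injective _ (image_injective.2 φ.injective)]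

theorem isExtremeRay_Ici_zero_iff {ι : Type*} [DecidableEq ι] {R : Set (ι → ℝ)} :
    IsExtremeRay (Ici 0) R ↔ ∃ i, R = ray (Pi.single i 1) := by
  constructor
  · rintro ⟨x, hx, hx0, rfl, hext⟩
    obtain ⟨i, hi⟩ := Function.ne_iff.1 hx0
    have hxi : 0 < x i := (hx i).lt_of_ne' hi
    have hsingle : Pi.single i (x i) ≤ x := by
      intro j
      rcases eq_or_ne j i with rfl | hji
      · simp
      · simpa [hji] using hx j
    obtain ⟨t, -, ht⟩ := hext _ (Pi.single_nonneg.2 hxi.le) (sub_nonneg.2 hsingle)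
    have ht1 : t = 1 := by
      have := congrFun ht i
      simp only [Pi.single_eq_same, Pi.smul_apply, smul_eq_mul] at this
      exact (mul_eq_right₀ hxi.ne').1 this.symm
    refine ⟨i, ?_⟩
    rw [ht1, one_smul] at ht
    have hsmul : x i • Pi.single i (1 : ℝ) = Pi.single i (x i) := by
      ext j; simp [Pi.single_apply]
    rw [← ht, ← hsmul]
    exact ray_smul_of_pos hxi _
  · rintro ⟨i, rfl⟩
    refine ⟨Pi.single i 1, Pi.single_nonneg.2 zero_le_one, by simp, rfl, fun y hy hle => ?_⟩
    refine ⟨y i, hy i, funext fun j => ?_⟩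
    rcases eq_or_ne j i with rfl | hji
    · simp
    · have h₁ : 0 ≤ y j := hy j
      have h₂ : 0 ≤ (Pi.single i 1 - y : ι → ℝ) j := hle j
      rw [Pi.sub_apply, Pi.single_eq_of_ne hji] at h₂
      simp [Pi.single_eq_of_ne hji, le_antisymm (by linarith) h₁]

theorem ncard_setOf_isExtremeRay_Ici_zero (ι : Type*) [Fintype ι] [DecidableEq ι] :
    {R | IsExtremeRay (Ici (0 : ι → ℝ)) R}.ncard = Fintype.card ι := by
  have hrays :
      {R | IsExtremeRay (Ici (0 : ι → ℝ)) R} = range fun i => ray (Pi.single i 1) := by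
    ext R
    simp [isExtremeRay_Ici_zero_iff, eq_comm]
  have hinj : Function.Injective fun i => ray (Pi.single i 1 : ι → ℝ) := by
    intro i j hij
    obtain ⟨t, -, ht⟩ : (Pi.single i 1 : ι → ℝ) ∈ ray (Pi.single j 1) := by
      simpa only [hij] using self_mem_ray (Pi.single i 1 : ι → ℝ)
    by_contra hne
    simpa [Pi.single_eq_of_ne hne] using congrFun ht i
  rw [hrays, ncard_range_of_injective hinj, Nat.card_eq_fintype_card]

end Rays

section Cones

variable {N : Type*} [AddCommGroup N] [Module ℝ N]

theorem Convex.exists_pointedCone_coe_eq {P : Set N} (hconv : Convex ℝ P) (hne : P.Nonempty)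
    (hcone : ∀ t : ℝ, 0 ≤ t → ∀ x ∈ P, t • x ∈ P) :
    ∃ C : PointedCone ℝ N, (C : Set N) = P := by
  refine ⟨.ofConeComb P hne fun x hx y hy a ha b hb => ?_, PointedCone.coe_ofConeComb ..⟩
  -- `a • x + b • y` is the midpoint of `(2 * a) • x` and `(2 * b) • y`
  convert hconv (hcone (2 * a) (by positivity) x hx) (hcone (2 * b) (by positivity) y hy)
    (by norm_num : (0 : ℝ) ≤ 1 / 2) (by norm_num : (0 : ℝ) ≤ 1 / 2) (by norm_num) using 1
  module

theorem injOn_ray_preimage_one (f : N →ₗ[ℝ] ℝ) : InjOn ray (f ⁻¹' {1}) := by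
  intro z hz w hw hzw
  obtain ⟨t, -, rfl⟩ : z ∈ ray w := hzw ▸ self_mem_ray z
  have hfw : f w = 1 := hw
  have ht : t = 1 := by simpa [hfw] using (hz : f (t • w) = 1)
  rw [ht, one_smul]

namespace PointedCone

variable (C : PointedCone ℝ N) {f : N →ₗ[ℝ] ℝ}

theorem isExtremeRay_ray_of_mem_extremePoints (hf : ∀ x ∈ C, x ≠ 0 → 0 < f x) {z : N}
    (hz : z ∈ ((C : Set N) ∩ f ⁻¹' {1}).extremePoints ℝ) : IsExtremeRay C (ray z) := by
  obtain ⟨⟨hzC, hfz⟩, hzext⟩ := hz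
  have hfz : f z = 1 := hfz
  have hf_nonneg : ∀ x ∈ C, 0 ≤ f x := fun x hx => by
    rcases eq_or_ne x 0 with rfl | hx0
    · simp
    · exact (hf x hx hx0).le
  refine ⟨z, hzC, fun h => by simp [h] at hfz, rfl, fun y hyC hzyC => ?_⟩
  have hfzy : f (z - y) = 1 - f y := by rw [map_sub, hfz]
  rcases (hf_nonneg y hyC).eq_or_lt with hfy | hfy
  · have hy : y = 0 := by_contra fun hy => (hf y hyC hy).ne' hfy.symm
    exact ⟨0, le_rfl, by simp [hy]⟩
  rcases (show f y ≤ 1 by linarith [hf_nonneg _ hzyC]).eq_or_lt with hfy' | hfy'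
  · have hzy : z - y = 0 := by_contra fun h => by linarith [hf _ hzyC h]
    exact ⟨1, zero_le_one, by rw [one_smul, eq_comm, ← sub_eq_zero, hzy]⟩
  -- `z` is a proper convex combination of the normalizations of `y` and `z - y`
  have hy₁ : (f y)⁻¹ • y ∈ (C : Set N) ∩ f ⁻¹' {1} :=
    ⟨C.smul_mem (by positivity) hyC, by simp [hfy.ne']⟩
  have hy₂ : (1 - f y)⁻¹ • (z - y) ∈ (C : Set N) ∩ f ⁻¹' {1} :=
    ⟨C.smul_mem (inv_nonneg.2 (by linarith)) hzyC, by simp [hfzy, (sub_pos.2 hfy').ne']⟩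
  have hseg : z ∈ openSegment ℝ ((f y)⁻¹ • y) ((1 - f y)⁻¹ • (z - y)) := by
    refine ⟨f y, 1 - f y, hfy, by linarith, by ring, ?_⟩
    rw [smul_inv_smul₀ hfy.ne', smul_inv_smul₀ (sub_pos.2 hfy').ne', add_sub_cancel]
  refine ⟨f y, hfy.le, ?_⟩
  rw [← hzext hy₁ hy₂ hseg, smul_inv_smul₀ hfy.ne']

theorem hull_extremePoints_eq [TopologicalSpace N] [IsTopologicalAddGroup N]
    [ContinuousSMul ℝ N] [LocallyConvexSpace ℝ N] [T2Space N]
    (hf : ∀ x ∈ C, x ≠ 0 → 0 < f x) (hB : IsCompact ((C : Set N) ∩ f ⁻¹' {1}))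
    (hE : (((C : Set N) ∩ f ⁻¹' {1}).extremePoints ℝ).Finite) :
    hull ℝ (((C : Set N) ∩ f ⁻¹' {1}).extremePoints ℝ) = C := by
  set B := (C : Set N) ∩ f ⁻¹' {1}
  refine le_antisymm (Submodule.span_le.2 fun z hz => hz.1.1) fun x hx => ?_
  rcases eq_or_ne x 0 with rfl | hx0
  · exact zero_mem _
  have hBconv : Convex ℝ B := C.convex.inter ((convex_singleton 1).linear_preimage f)
  -- Krein–Milman: the compact convex base is the convex hull of its finitely many extreme points
  have hB_eq : B = convexHull ℝ (B.extremePoints ℝ) :=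
    (closure_convexHull_extremePoints hB hBconv).symm.trans (hE.isClosed_convexHull ℝ).closure_eq
  have hfx := hf x hx hx0
  have hxB : (f x)⁻¹ • x ∈ B :=
    ⟨C.smul_mem (by positivity) hx, by simp [hfx.ne']⟩
  rw [hB_eq] at hxB
  have := (hull ℝ _).smul_mem hfx.le (convexHull_min subset_hull (hull ℝ _).convex hxB)
  rwa [smul_inv_smul₀ hfx.ne'] at this

end PointedCone

end Cones

theorem ProperCone.exists_strongDual_pos_of_isCompact {E : Type*} [TopologicalSpace E]
    [AddCommGroup E] [IsTopologicalAddGroup E] [Module ℝ E] [ContinuousSMul ℝ E]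
    [LocallyConvexSpace ℝ E] (C : ProperCone ℝ E) {K : Set E} (hK : IsCompact K)
    (hKC : K ⊆ C) (hK_neg : ∀ x ∈ K, -x ∉ C) :
    ∃ f : StrongDual ℝ E, (∀ x ∈ C, 0 ≤ f x) ∧ ∀ x ∈ K, 0 < f x := by
  choose g hgC hgK using fun x : K => C.hyperplane_separation_point (hK_neg x x.2)
  -- finitely many of the separating functionals already cover `K`; their sum works
  obtain ⟨t, ht⟩ := hK.elim_finite_subcover (fun x => {y | 0 < g x y})
    (fun x => isOpen_lt continuous_const (g x).continuous)
    fun x hx => mem_iUnion.2 ⟨⟨x, hx⟩, by simpa using hgK ⟨x, hx⟩⟩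
  refine ⟨∑ x ∈ t, g x, fun y hy => ?_, fun y hy => ?_⟩
  · simpa using Finset.sum_nonneg fun x _ => hgC x y hy
  · obtain ⟨x, hxt, hxy⟩ := mem_iUnion₂.1 (ht hy)
    simpa using Finset.sum_pos' (fun x _ => hgC x y (hKC hy)) ⟨x, hxt, hxy⟩

theorem PointedCone.exists_pos_isCompact_base {N : Type*} [NormedAddCommGroup N]
    [NormedSpace ℝ N] [FiniteDimensional ℝ N] (C : PointedCone ℝ N)
    (hC : IsClosed (C : Set N)) (hsal : (C : ConvexCone ℝ N).Salient) :
    ∃ f : N →ₗ[ℝ] ℝ,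
      (∀ x ∈ C, x ≠ 0 → 0 < f x) ∧ IsCompact ((C : Set N) ∩ f ⁻¹' {1}) := by
  set K := (C : Set N) ∩ Metric.sphere 0 1
  have hK : IsCompact K := (isCompact_sphere 0 1).inter_left hC
  have hK0 : ∀ x ∈ K, x ≠ 0 := fun x hx => ne_zero_of_mem_unit_sphere ⟨x, hx.2⟩
  obtain ⟨g, -, hgK⟩ := ProperCone.exists_strongDual_pos_of_isCompact ⟨C, hC⟩ hK
    inter_subset_left fun x hx => hsal x hx.1 (hK0 x hx)
  have hnormalize : ∀ x ∈ C, x ≠ 0 → ‖x‖⁻¹ • x ∈ K := fun x hx hx0 =>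
    ⟨C.smul_mem (by positivity) hx, by simpa using norm_smul_inv_norm (𝕜 := ℝ) hx0⟩
  have hpos : ∀ x ∈ C, x ≠ 0 → 0 < g x := fun x hx hx0 => by
    simpa [hx0] using hgK _ (hnormalize x hx hx0)
  refine ⟨g, hpos, ?_⟩
  have hcont : ContinuousOn (fun s => (g s)⁻¹ • s) K :=
    (g.continuous.continuousOn.inv₀ fun s hs => (hgK s hs).ne').smul continuousOn_id
  -- the base is contained in the image of `K` under `s ↦ (g s)⁻¹ • s`
  refine (hK.image_of_continuousOn hcont).of_isClosed_subset
    (hC.inter (isClosed_singleton.preimage g.continuous)) fun x ⟨hx, hgx⟩ => ?_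
  have hgx : g x = 1 := hgx
  have hx0 : x ≠ 0 := by rintro rfl; simp at hgx
  refine ⟨‖x‖⁻¹ • x, hnormalize x hx hx0, ?_⟩
  change (g (‖x‖⁻¹ • x))⁻¹ • ‖x‖⁻¹ • x = x
  rw [map_smul, smul_eq_mul, hgx, mul_one, inv_inv, smul_inv_smul₀ (norm_ne_zero_iff.2 hx0)]

theorem Module.Basis.mem_hull_range_iff {N ι : Type*} [AddCommGroup N] [Module ℝ N] [Fintype ι]
    (b : Module.Basis ι ℝ N) {x : N} :
    x ∈ PointedCone.hull ℝ (range b) ↔ ∀ i, 0 ≤ b.repr x i := by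
  rw [Submodule.mem_span_range_iff_exists_fun]
  constructor
  · rintro ⟨c, rfl⟩ i
    simp only [← Nonneg.coe_smul, b.repr_sum_self]
    exact (c i).2
  · exact fun h => ⟨fun i => ⟨b.repr x i, h i⟩, by simp [b.sum_repr]⟩

theorem exists_linearEquiv_mem_hull_iff {N : Type*} [AddCommGroup N] [Module ℝ N] {E : Set N}
    (hE : E.Finite) (hcard : E.ncard ≤ Module.finrank ℝ N)
    (hspan : Submodule.span ℝ E = ⊤) :
    ∃ φ : N ≃ₗ[ℝ] (Fin (Module.finrank ℝ N) → ℝ),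
      ∀ x, x ∈ PointedCone.hull ℝ E ↔ ∀ i, 0 ≤ φ x i := by
  have := hE.fintype
  have hcard' : Fintype.card E = Module.finrank ℝ N := by
    rw [← Set.toFinset_card, ← Set.ncard_eq_toFinset_card']
    refine le_antisymm hcard ?_
    have := finrank_span_le_card (R := ℝ) E
    rwa [hspan, finrank_top, ← Set.ncard_eq_toFinset_card'] at this
  let b := (basisOfTopLeSpanOfCardEqFinrank ((↑) : E → N) (by rw [Subtype.range_coe, hspan])
    hcard').reindex (Fintype.equivFinOfCardEq hcard')
  have hb : range b = E := by
    rw [Module.Basis.range_reindex, coe_basisOfTopLeSpanOfCardEqFinrank, Subtype.range_coe]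
  exact ⟨b.equivFun, fun x => by rw [← hb, b.mem_hull_range_iff]; simp⟩

theorem finite_setOf_isExtremeRay_of_ncard_eq_finrank {N : Type*} [AddCommGroup N] [Module ℝ N]
    [Module.Finite ℝ N] {P : Set N} (h : {R | IsExtremeRay P R}.ncard = Module.finrank ℝ N) :
    {R | IsExtremeRay P R}.Finite := by
  by_contra hinf
  -- an infinite set has `ncard = 0`, so `N` would be trivial and have no rays at all
  rw [Set.Infinite.ncard hinf, eq_comm, Module.finrank_zero_iff] at h
  exact hinf (Set.finite_empty.subset fun R ⟨x, _, hx0, _⟩ => hx0 (Subsingleton.elim x 0))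

/-- Lemma 5.5: a closed convex cone with nonempty interior in a
`d`-dimensional real vector space is linearly isomorphic to the quadrant `[0,∞)^d` if and
only if it has exactly `d` extreme rays. -/
theorem cone_quadrant_iff_extreme_rays
    (N : Type*) [NormedAddCommGroup N] [NormedSpace ℝ N] [FiniteDimensional ℝ N]
    (P : Set N) (hPclosed : IsClosed P) (hPconv : Convex ℝ P)
    (hPcone : ∀ t : ℝ, 0 ≤ t → ∀ x ∈ P, t • x ∈ P)
    (hPpointed : P ∩ (-P) = {0})
    (hPint : (interior P).Nonempty) :
    (∃ φ : N ≃ₗ[ℝ] (Fin (Module.finrank ℝ N) → ℝ),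
        ∀ x : N, x ∈ P ↔ ∀ i, 0 ≤ φ x i) ↔
    {R : Set N | IsExtremeRay P R}.ncard = Module.finrank ℝ N := by
  constructor
  · rintro ⟨φ, hφ⟩
    have hP : φ '' P = Ici 0 := by
      ext u
      simp [φ.image_eq_preimage_symm, hφ, Pi.le_def]
    rw [← ncard_setOf_isExtremeRay_image P φ, hP, ncard_setOf_isExtremeRay_Ici_zero,
      Fintype.card_fin]
  · intro hcount
    obtain ⟨C, rfl⟩ := hPconv.exists_pointedCone_coe_eq (hPint.mono interior_subset) hPcone
    obtain ⟨f, hf, hB⟩ :=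
      C.exists_pos_isCompact_base hPclosed (C.salient_iff_inter_neg_eq_singleton.2 hPpointed)
    set E := ((C : Set N) ∩ f ⁻¹' {1}).extremePoints ℝ
    have hmaps : MapsTo ray E {R | IsExtremeRay C R} := fun z hz =>
      C.isExtremeRay_ray_of_mem_extremePoints hf hz
    have hinj : InjOn ray E := (injOn_ray_preimage_one f).mono fun z hz => hz.1.2
    have hrays := finite_setOf_isExtremeRay_of_ncard_eq_finrank hcount
    have hE : E.Finite := hrays.of_injOn hmaps hinj
    have hCE : PointedCone.hull ℝ E = C := C.hull_extremePoints_eq hf hB hE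
    have hspan : Submodule.span ℝ E = ⊤ := by
      have := Submodule.eq_top_of_nonempty_interior' (Submodule.span ℝ (C : Set N))
        (hPint.mono (interior_mono Submodule.subset_span))
      rwa [← hCE, Submodule.span_span_of_tower] at this
    have hcard : E.ncard ≤ Module.finrank ℝ N :=
      hcount ▸ ncard_le_ncard_of_injOn ray hmaps hinj hrays
    obtain ⟨φ, hφ⟩ := exists_linearEquiv_mem_hull_iff hE hcard hspan
    exact ⟨φ, fun x => hCE ▸ hφ x⟩
end

section
/- Let N be a finite-dimensional linear subspace of E = ℝ^n × W such that C ∩ N is a closed convex cone (in particular (C ∩ N) ∩ (−(C ∩ N)) = {0}). If a ∈ C ∩ N is nonzero and generates an extreme ray [0,∞)·a of C ∩ N, then dim N − 1 ≤ #σ_a. (First part of Lemma 5.6.) -/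
/-!
Restricting to the coordinates in `σ_a` is a linear map on `N` whose kernel lies on the line
through `a`: for `v` in the kernel, `a ± ε v` stays in the quadrant for small `ε > 0`, and
extremality of the ray forces `v ∈ ℝ a`. Rank–nullity then gives `dim N ≤ #σ_a + 1`.
-/

open Pointwise

/- Extremality applied to `a = ½ (a + ε v) + ½ (a - ε v)` puts `½ (a + ε v)` on the ray. -/
theorem mem_span_singleton_of_add_smul_mem_of_sub_smul_mem {V : Type*} [AddCommGroup V]
    [Module ℝ V] {K : Set V} (hK : ∀ c : ℝ, 0 ≤ c → ∀ x ∈ K, c • x ∈ K) {a : V}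
    (hextreme : ∀ y ∈ K, a - y ∈ K → y ∈ ℝ ∙ a) {v : V} {ε : ℝ} (hε : ε ≠ 0)
    (hadd : a + ε • v ∈ K) (hsub : a - ε • v ∈ K) : v ∈ ℝ ∙ a := by
  have hmid : a - (2⁻¹ : ℝ) • (a + ε • v) = (2⁻¹ : ℝ) • (a - ε • v) := by module
  obtain ⟨t, ht⟩ := Submodule.mem_span_singleton.1 <|
    hextreme _ (hK _ (by norm_num) _ hadd) (hmid ▸ hK _ (by norm_num) _ hsub)
  refine Submodule.mem_span_singleton.2 ⟨ε⁻¹ * (2 * t - 1), ?_⟩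
  have hv : ε • v = (2 * t - 1) • a := by
    rw [sub_smul, mul_smul, ht, smul_smul]
    norm_num
  rw [mul_smul, ← hv, smul_smul, inv_mul_cancel₀ hε, one_smul]

open Filter Topology in
theorem exists_pos_forall_abs_mul_le {ι : Type*} [Finite ι] {a v : ι → ℝ} (ha : ∀ i, 0 ≤ a i)
    (hv : ∀ i, a i = 0 → v i = 0) : ∃ ε > 0, ∀ i, |ε * v i| ≤ a i := by
  have hnhds : ∀ᶠ ε in 𝓝 (0 : ℝ), ∀ i, |ε * v i| ≤ a i := by
    refine eventually_all.2 fun i => ?_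
    rcases (ha i).eq_or_lt with hai | hai
    · simp [hv i hai.symm, ← hai]
    · have hlim : Tendsto (fun ε : ℝ => |ε * v i|) (𝓝 0) (𝓝 0) := by
        simpa using ((continuous_id.mul continuous_const).abs).tendsto (0 : ℝ)
      exact hlim.eventually (ge_mem_nhds hai)
  have hpos : ∀ᶠ ε in 𝓝[>] (0 : ℝ), 0 < ε := self_mem_nhdsWithin
  exact (hpos.and (hnhds.filter_mono nhdsWithin_le_nhds)).exists

theorem finrank_le_finrank_add_one_of_ker_le_span {K V F : Type*} [DivisionRing K]
    [AddCommGroup V] [Module K V] [AddCommGroup F] [Module K F] [FiniteDimensional K V]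
    [FiniteDimensional K F] (T : V →ₗ[K] F) {a : V} (hker : LinearMap.ker T ≤ K ∙ a) :
    Module.finrank K V ≤ Module.finrank K F + 1 := by
  have hrange : Module.finrank K (LinearMap.range T) ≤ Module.finrank K F :=
    Submodule.finrank_le _
  have hspan : Module.finrank K (K ∙ a) ≤ 1 := by
    simpa using finrank_span_le_card ({a} : Set V)
  have := Submodule.finrank_mono hker
  have := T.finrank_range_add_finrank_ker
  omega

theorem mem_span_singleton_of_forall_apply_eq_zero {ι V : Type*} [Finite ι] [AddCommGroup V]
    [Module ℝ V] (f : V →ₗ[ℝ] ι → ℝ) {a : V} (ha : ∀ i, 0 ≤ f a i)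
    (hextreme : ∀ y, (∀ i, 0 ≤ f y i) → (∀ i, 0 ≤ f (a - y) i) → y ∈ ℝ ∙ a) {v : V}
    (hv : ∀ i, f a i = 0 → f v i = 0) : v ∈ ℝ ∙ a := by
  obtain ⟨ε, hε, hle⟩ := exists_pos_forall_abs_mul_le ha hv
  refine mem_span_singleton_of_add_smul_mem_of_sub_smul_mem (K := {x | ∀ i, 0 ≤ f x i})
    (fun c hc x hx i => ?_) hextreme hε.ne' (fun i => ?_) (fun i => ?_)
  · simpa using mul_nonneg hc (hx i)
  · simpa using neg_le_iff_add_nonneg'.1 (abs_le.1 (hle i)).1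
  · simpa using (abs_le.1 (hle i)).2

theorem extreme_ray_dim_le_general
    (n : ℕ) (W : Type*) [NormedAddCommGroup W] [NormedSpace ℝ W]
    (C : Set ((Fin n → ℝ) × W)) (hC : C = {p : (Fin n → ℝ) × W | ∀ i : Fin n, 0 ≤ p.1 i})
    (N : Submodule ℝ ((Fin n → ℝ) × W)) [FiniteDimensional ℝ N]
    (a : (Fin n → ℝ) × W) (haC : a ∈ C) (haN : a ∈ N)
    -- a generates an extreme ray of C ∩ N
    (hextreme : ∀ y, y ∈ C → y ∈ N → a - y ∈ C → a - y ∈ N →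
      ∃ t : ℝ, 0 ≤ t ∧ y = t • a) :
    Module.finrank ℝ N - 1 ≤ Set.ncard {i : Fin n | a.1 i = 0} := by
  subst hC
  set σ : Set (Fin n) := {i | a.1 i = 0}
  let a' : N := ⟨a, haN⟩
  let f : N →ₗ[ℝ] Fin n → ℝ := LinearMap.fst ℝ _ W ∘ₗ N.subtype
  let T : N →ₗ[ℝ] σ → ℝ := LinearMap.funLeft ℝ ℝ ((↑) : σ → Fin n) ∘ₗ f
  have hker : LinearMap.ker T ≤ ℝ ∙ a' := fun v hv =>
    mem_span_singleton_of_forall_apply_eq_zero f (a := a') haC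
      (fun y hy hay => by
        obtain ⟨t, -, hyt⟩ := hextreme y hy y.2 hay (a' - y).2
        exact Submodule.mem_span_singleton.2 ⟨t, Subtype.ext hyt.symm⟩)
      fun i hi => congrFun hv ⟨i, hi⟩
  have hσ : Module.finrank ℝ (σ → ℝ) = σ.ncard := by
    rw [Module.finrank_fintype_fun_eq_card, ← Nat.card_eq_fintype_card, Nat.card_coe_set_eq]
  have := finrank_le_finrank_add_one_of_ker_le_span T hker
  omega

/-- first part of Lemma 5.6: if `C ∩ N` is a closed convex cone and the
nonzero point `a ∈ C ∩ N` generates an extreme ray of `C ∩ N`, then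
`dim N − 1 ≤ #σ_a`, where `σ_a = {i : a_i = 0}`. -/
theorem extreme_ray_dim_le
    (n : ℕ) (W : Type*) [NormedAddCommGroup W] [NormedSpace ℝ W]
    (C : Set ((Fin n → ℝ) × W)) (hC : C = {p : (Fin n → ℝ) × W | ∀ i : Fin n, 0 ≤ p.1 i})
    (N : Submodule ℝ ((Fin n → ℝ) × W)) [FiniteDimensional ℝ N]
    -- C ∩ N is a closed convex cone; the nontrivial requirement is pointedness
    (hpointed : (C ∩ (N : Set ((Fin n → ℝ) × W))) ∩ (-(C ∩ (N : Set ((Fin n → ℝ) × W)))) = {0})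
    (a : (Fin n → ℝ) × W) (haC : a ∈ C) (haN : a ∈ N) (ha0 : a ≠ 0)
    -- a generates an extreme ray of C ∩ N
    (hextreme : ∀ y, y ∈ C → y ∈ N → a - y ∈ C → a - y ∈ N →
      ∃ t : ℝ, 0 ≤ t ∧ y = t • a) :
    Module.finrank ℝ N - 1 ≤ Set.ncard {i : Fin n | a.1 i = 0} :=
  extreme_ray_dim_le_general n W C hC N a haC haN hextreme
end

section
/- Let N be a finite-dimensional linear subspace of E = ℝ^n × W in good position to C, with good complement N⊥ and constant c > 0. Let Σ = ⋃ { σ_a : a ∈ (C ∩ N)∖{0} }. Then N⊥ ⊆ ℝ^{Σᶜ} ⊕ W; that is, every m = (m₁,…,m_n, m_∞) ∈ N⊥ satisfies m_i = 0 for all i ∈ Σ. (Lemma 5.7.) -/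
section GoodPosition

variable {E : Type*} [NormedAddCommGroup E] [NormedSpace ℝ E]

/-- Scaling `a` by `‖m‖ / (c ‖a‖)` makes `m` small enough relative to it for the
good-position condition to apply. -/
theorem exists_nonneg_smul_add_mem {C : Set E} (hCsmul : ∀ t : ℝ, 0 ≤ t → ∀ x ∈ C, t • x ∈ C)
    {N M : Submodule ℝ E} {c : ℝ} (hc : 0 < c)
    (hgood : ∀ v ∈ N, ∀ m ∈ M, ‖m‖ ≤ c * ‖v‖ → v ∈ C → v + m ∈ C)
    {a : E} (haC : a ∈ C) (haN : a ∈ N) (ha : a ≠ 0) {m : E} (hm : m ∈ M) :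
    ∃ t : ℝ, 0 ≤ t ∧ t • a + m ∈ C := by
  have hca : 0 < c * ‖a‖ := mul_pos hc (norm_pos_iff.mpr ha)
  set t := ‖m‖ / (c * ‖a‖)
  have ht : 0 ≤ t := div_nonneg (norm_nonneg m) hca.le
  have hsmall : ‖m‖ ≤ c * ‖t • a‖ := by
    rw [norm_smul, Real.norm_of_nonneg ht, mul_left_comm, div_mul_cancel₀ _ hca.ne']
  exact ⟨t, ht, hgood _ (N.smul_mem t haN) m hm hsmall (hCsmul t ht a haC)⟩

end GoodPosition

theorem good_complement_vanishes_on_Sigma_general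
    (n : ℕ) (W : Type*) [NormedAddCommGroup W] [NormedSpace ℝ W]
    (C : Set ((Fin n → ℝ) × W)) (hC : C = {p : (Fin n → ℝ) × W | ∀ i : Fin n, 0 ≤ p.1 i})
    (N Nperp : Submodule ℝ ((Fin n → ℝ) × W))
    -- N in good position to C with good complement N⊥ and constant c
    (c : ℝ) (hc : 0 < c)
    (hgood : ∀ v ∈ N, ∀ m ∈ Nperp, ‖m‖ ≤ c * ‖v‖ → ((v + m ∈ C) ↔ v ∈ C)) :
    ∀ m ∈ Nperp, ∀ i : Fin n,
      (∃ a : (Fin n → ℝ) × W, a ∈ C ∧ a ∈ N ∧ a ≠ 0 ∧ a.1 i = 0) → m.1 i = 0 := by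
  rintro m hm i ⟨a, haC, haN, ha, hai⟩
  have hCsmul : ∀ t : ℝ, 0 ≤ t → ∀ x ∈ C, t • x ∈ C := by
    subst hC
    exact fun t ht x hx j => mul_nonneg ht (hx j)
  -- `t • a + m' ∈ C` and `(t • a).1 i = 0` force `0 ≤ m'.1 i`; apply this to `m` and `-m`.
  have hnonneg : ∀ m' ∈ Nperp, 0 ≤ m'.1 i := fun m' hm' => by
    obtain ⟨t, -, htm⟩ := exists_nonneg_smul_add_mem hCsmul hc
      (fun v hv m hm h => (hgood v hv m hm h).mpr) haC haN ha hm'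
    rw [hC] at htm
    simpa [hai] using htm i
  have hneg : 0 ≤ -m.1 i := hnonneg (-m) (neg_mem hm)
  linarith [hnonneg m hm]

/-- Lemma 5.7: a good complement `N⊥` of a subspace `N` in good position
to `C = [0,∞)^n × W` is contained in `ℝ^{Σᶜ} ⊕ W`, where
`Σ = ⋃ {σ_a : a ∈ (C ∩ N)∖{0}}`. -/
theorem good_complement_vanishes_on_Sigma
    (n : ℕ) (W : Type*) [NormedAddCommGroup W] [NormedSpace ℝ W]
    (C : Set ((Fin n → ℝ) × W)) (hC : C = {p : (Fin n → ℝ) × W | ∀ i : Fin n, 0 ≤ p.1 i})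
    (N Nperp : Submodule ℝ ((Fin n → ℝ) × W)) [FiniteDimensional ℝ N]
    -- N in good position to C with good complement N⊥ and constant c
    (hint : ∃ x, x ∈ N ∧ x ∈ C ∧ ∃ ε > 0, ∀ y ∈ N, ‖y - x‖ < ε → y ∈ C)
    (hclosed : IsClosed (Nperp : Set ((Fin n → ℝ) × W)))
    (hcompl : IsCompl N Nperp)
    (c : ℝ) (hc : 0 < c)
    (hgood : ∀ v ∈ N, ∀ m ∈ Nperp, ‖m‖ ≤ c * ‖v‖ → ((v + m ∈ C) ↔ v ∈ C)) :
    ∀ m ∈ Nperp, ∀ i : Fin n,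
      (∃ a : (Fin n → ℝ) × W, a ∈ C ∧ a ∈ N ∧ a ≠ 0 ∧ a.1 i = 0) → m.1 i = 0 :=
  good_complement_vanishes_on_Sigma_general n W C hC N Nperp c hc hgood
end

section
/- Let N be a finite-dimensional linear subspace of E = ℝ^n × W in good position to C with good complement N⊥. Identify W with {0} × W, and let Ñ be any linear complement of N ∩ W in N, so that N = Ñ ⊕ (N ∩ W). Then Ñ is in good position to C, and Ñ⊥ := (N ∩ W) ⊕ N⊥ is a good complement of Ñ in E. (Lemma 5.8.) -/
/-!
The quadrant `C = [0,∞)^n × W` is invariant under translations by `W₀ = {0} × W`, so the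
`N ∩ W₀`-component of a vector may be moved freely in or out of membership tests for `C`.
Given `v ∈ Ñ` and `m = a + b` with `a ∈ N ∩ W₀`, `b ∈ N⊥` and `m` small compared to `v`, the
continuity of the projection onto `N` along `N⊥` makes `a` and `b` small, so that `b` is small
compared to `v + a ∈ N`; hence `v + m ∈ C ↔ v + a ∈ C ↔ v ∈ C`.
-/

open Submodule

section GoodPosition

variable {𝕜 E : Type*} [NontriviallyNormedField 𝕜] [NormedAddCommGroup E] [NormedSpace 𝕜 E]

theorem Submodule.IsTopCompl.exists_norm_add_norm_le {p q : Submodule 𝕜 E} (h : IsTopCompl p q) :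
    ∃ K > 0, ∀ a ∈ p, ∀ b ∈ q, ‖a‖ + ‖b‖ ≤ K * ‖a + b‖ := by
  set π := p.projectionOntoL q h
  refine ⟨1 + 2 * ‖π‖, by positivity, fun a ha b hb ↦ ?_⟩
  have hπ : (π (a + b) : E) = a := by
    simp [π, map_add, projectionOnto_apply_left h.isCompl ⟨a, ha⟩,
      projectionOnto_apply_right h.isCompl ⟨b, hb⟩]
  have ha_le : ‖a‖ ≤ ‖π‖ * ‖a + b‖ :=
    calc ‖a‖ = ‖π (a + b)‖ := (congrArg norm hπ).symm
      _ ≤ ‖π‖ * ‖a + b‖ := π.le_opNorm (a + b)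
  linarith [norm_le_add_norm_add' a b]

theorem exists_interior_point_of_sup {C : Set E} {A B : Submodule 𝕜 E}
    (hBC : ∀ v, ∀ a ∈ B, v + a ∈ C ↔ v ∈ C)
    (h : ∃ x ∈ A ⊔ B, x ∈ C ∧ ∃ ε > 0, ∀ y ∈ A ⊔ B, ‖y - x‖ < ε → y ∈ C) :
    ∃ x ∈ A, x ∈ C ∧ ∃ ε > 0, ∀ y ∈ A, ‖y - x‖ < ε → y ∈ C := by
  obtain ⟨_, hx, hxC, ε, hε, hball⟩ := h
  obtain ⟨x, hxA, a, ha, rfl⟩ := mem_sup.mp hx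
  refine ⟨x, hxA, (hBC x a ha).mp hxC, ε, hε, fun y hy hyx ↦ (hBC y a ha).mp ?_⟩
  exact hball (y + a) (add_mem (mem_sup_left hy) (mem_sup_right ha)) (by simpa using hyx)

theorem exists_goodComplement_sup {C : Set E} {N P B : Submodule 𝕜 E} (hNP : IsTopCompl N P)
    (hBN : B ≤ N) (hBC : ∀ v, ∀ a ∈ B, v + a ∈ C ↔ v ∈ C) {c : ℝ} (hc : 0 < c)
    (hgood : ∀ v ∈ N, ∀ m ∈ P, ‖m‖ ≤ c * ‖v‖ → (v + m ∈ C ↔ v ∈ C)) :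
    ∃ c' : ℝ, 0 < c' ∧ ∀ v ∈ N, ∀ m ∈ B ⊔ P, ‖m‖ ≤ c' * ‖v‖ → (v + m ∈ C ↔ v ∈ C) := by
  obtain ⟨K, hK, hKab⟩ := hNP.exists_norm_add_norm_le
  refine ⟨min 1 c / (2 * K), by positivity, fun v hv m hm hm_le ↦ ?_⟩
  obtain ⟨a, ha, b, hb, rfl⟩ := mem_sup.mp hm
  have hab : ‖a‖ + ‖b‖ ≤ min 1 c / 2 * ‖v‖ :=
    calc ‖a‖ + ‖b‖ ≤ K * ‖a + b‖ := hKab a (hBN ha) b hb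
      _ ≤ K * (min 1 c / (2 * K) * ‖v‖) := by gcongr
      _ = min 1 c / 2 * ‖v‖ := by field_simp
  have ha_le : ‖a‖ ≤ ‖v‖ / 2 := by
    nlinarith [min_le_left 1 c, norm_nonneg b, norm_nonneg v]
  have hb_le : ‖b‖ ≤ c * ‖v + a‖ := by
    have hva : ‖v‖ / 2 ≤ ‖v + a‖ := by linarith [norm_le_add_norm_add v a]
    nlinarith [min_le_right 1 c, norm_nonneg a, norm_nonneg v]
  rw [← add_assoc, hgood (v + a) (add_mem hv (hBN ha)) b hb hb_le, hBC v a ha]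

end GoodPosition

theorem complement_good_position_general
    (n : ℕ) (W : Type*) [NormedAddCommGroup W] [NormedSpace ℝ W]
    (C : Set ((Fin n → ℝ) × W)) (hC : C = {p : (Fin n → ℝ) × W | ∀ i : Fin n, 0 ≤ p.1 i})
    -- W identified with {0} × W
    (W₀ : Submodule ℝ ((Fin n → ℝ) × W))
    (hW₀ : W₀ = Submodule.prod (⊥ : Submodule ℝ (Fin n → ℝ)) (⊤ : Submodule ℝ W))
    (N Nperp Ntilde : Submodule ℝ ((Fin n → ℝ) × W)) [FiniteDimensional ℝ N]
    -- N in good position to C with good complement N⊥ and constant c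
    (hint : ∃ x, x ∈ N ∧ x ∈ C ∧ ∃ ε > 0, ∀ y ∈ N, ‖y - x‖ < ε → y ∈ C)
    (hclosed : IsClosed (Nperp : Set ((Fin n → ℝ) × W)))
    (hcompl : IsCompl N Nperp)
    (c : ℝ) (hc : 0 < c)
    (hgood : ∀ v ∈ N, ∀ m ∈ Nperp, ‖m‖ ≤ c * ‖v‖ → ((v + m ∈ C) ↔ v ∈ C))
    -- Ñ is a linear complement of N ∩ W₀ in N
    (hNt : Ntilde ≤ N)
    (hNtdisj : Ntilde ⊓ (N ⊓ W₀) = ⊥)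
    (hNtsup : Ntilde ⊔ (N ⊓ W₀) = N) :
    -- Ñ⊥ := (N ∩ W₀) ⊕ N⊥ is a closed complement of Ñ …
    IsClosed (((N ⊓ W₀) ⊔ Nperp : Submodule ℝ ((Fin n → ℝ) × W)) : Set ((Fin n → ℝ) × W)) ∧
    IsCompl Ntilde ((N ⊓ W₀) ⊔ Nperp) ∧
    -- … Ñ ∩ C has nonempty interior in Ñ …
    (∃ x, x ∈ Ntilde ∧ x ∈ C ∧ ∃ ε > 0, ∀ y ∈ Ntilde, ‖y - x‖ < ε → y ∈ C) ∧
    -- … and Ñ⊥ is a good complement of Ñ for some constant c' > 0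
    (∃ c' : ℝ, 0 < c' ∧ ∀ v ∈ Ntilde, ∀ m ∈ (N ⊓ W₀) ⊔ Nperp,
      ‖m‖ ≤ c' * ‖v‖ → ((v + m ∈ C) ↔ v ∈ C)) := by
  have hNP : IsTopCompl N Nperp :=
    (IsCompl.isTopCompl_of_isClosed_of_finiteDimensional hcompl.symm hclosed).symm
  have hinv : ∀ v, ∀ a ∈ N ⊓ W₀, v + a ∈ C ↔ v ∈ C := by
    rintro v a ⟨-, ha⟩
    subst hC hW₀
    simp_all
  obtain ⟨c', hc', hgood'⟩ := exists_goodComplement_sup hNP inf_le_left hinv hc hgood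
  refine ⟨?_, ?_, exists_interior_point_of_sup hinv (by rwa [hNtsup]), c', hc', ?_⟩
  · rw [sup_comm]
    exact isClosed_sup_finiteDimensional _ _ hclosed
  · exact Disjoint.isCompl_sup_right_of_isCompl_sup_left (disjoint_iff.mpr hNtdisj)
      (by rwa [hNtsup])
  · exact fun v hv ↦ hgood' v (hNt hv)

/-- Lemma 5.8: if `N` is in good position to `C = [0,∞)^n × W` with good
complement `N⊥`, and `Ñ` is a linear complement of `N ∩ ({0} × W)` in `N`, then `Ñ` is in
good position to `C` and `Ñ⊥ = (N ∩ ({0} × W)) ⊕ N⊥` is a good complement of `Ñ`. -/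
theorem complement_good_position
    (n : ℕ) (W : Type*) [NormedAddCommGroup W] [NormedSpace ℝ W] [CompleteSpace W]
    (C : Set ((Fin n → ℝ) × W)) (hC : C = {p : (Fin n → ℝ) × W | ∀ i : Fin n, 0 ≤ p.1 i})
    -- W identified with {0} × W
    (W₀ : Submodule ℝ ((Fin n → ℝ) × W))
    (hW₀ : W₀ = Submodule.prod (⊥ : Submodule ℝ (Fin n → ℝ)) (⊤ : Submodule ℝ W))
    (N Nperp Ntilde : Submodule ℝ ((Fin n → ℝ) × W)) [FiniteDimensional ℝ N]
    -- N in good position to C with good complement N⊥ and constant c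
    (hint : ∃ x, x ∈ N ∧ x ∈ C ∧ ∃ ε > 0, ∀ y ∈ N, ‖y - x‖ < ε → y ∈ C)
    (hclosed : IsClosed (Nperp : Set ((Fin n → ℝ) × W)))
    (hcompl : IsCompl N Nperp)
    (c : ℝ) (hc : 0 < c)
    (hgood : ∀ v ∈ N, ∀ m ∈ Nperp, ‖m‖ ≤ c * ‖v‖ → ((v + m ∈ C) ↔ v ∈ C))
    -- Ñ is a linear complement of N ∩ W₀ in N
    (hNt : Ntilde ≤ N)
    (hNtdisj : Ntilde ⊓ (N ⊓ W₀) = ⊥)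
    (hNtsup : Ntilde ⊔ (N ⊓ W₀) = N) :
    -- Ñ⊥ := (N ∩ W₀) ⊕ N⊥ is a closed complement of Ñ …
    IsClosed (((N ⊓ W₀) ⊔ Nperp : Submodule ℝ ((Fin n → ℝ) × W)) : Set ((Fin n → ℝ) × W)) ∧
    IsCompl Ntilde ((N ⊓ W₀) ⊔ Nperp) ∧
    -- … Ñ ∩ C has nonempty interior in Ñ …
    (∃ x, x ∈ Ntilde ∧ x ∈ C ∧ ∃ ε > 0, ∀ y ∈ Ntilde, ‖y - x‖ < ε → y ∈ C) ∧
    -- … and Ñ⊥ is a good complement of Ñ for some constant c' > 0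
    (∃ c' : ℝ, 0 < c' ∧ ∀ v ∈ Ntilde, ∀ m ∈ (N ⊓ W₀) ⊔ Nperp,
      ‖m‖ ≤ c' * ‖v‖ → ((v + m ∈ C) ↔ v ∈ C)) :=
  complement_good_position_general n W C hC W₀ hW₀ N Nperp Ntilde hint hclosed hcompl c hc hgood hNt
    hNtdisj hNtsup
end

section
/- Let N be a finite-dimensional linear subspace of E = ℝ^n × W in good position to C, let Ñ be a linear complement of N ∩ ({0} × W) in N, and let Σ = ⋃ { σ_a : a ∈ (C ∩ N)∖{0} }. Then either Ñ ∩ (ℝ^{Σᶜ} ⊕ W) = {0}, or Ñ ⊆ ℝ^{Σᶜ} ⊕ W; and in the second case dim Ñ = 1 and Σ = ∅. (Lemma 5.10.) -/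
/-!
Let `x ∈ Ñ` be nonzero and vanish on `Σ`, and let `x₀` be an interior point of `N ∩ C` in `N`.
Then `N` meets `{0} × W` trivially: a nonzero vector there would put every index into `Σ`, and
`x` into `Ñ ∩ ({0} × W) = 0`. Good position makes every vector of `N⊥` vanish on `Σ`, so for
`i ∈ Σ` the space `N` contains a vector with `i`-th coordinate `1`, and hence `x₀` is strictly
positive on `Σ`. Walking from `x₀` in a direction `b ∈ N` until the boundary of `C` is reached
gives either `x₀ ∈ ℝ b` or a nonzero point of `C ∩ N` with a zero coordinate at which `b` does
not vanish, i.e. an index of `Σ` in the support of `b`. For `b = x` both alternatives are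
incompatible with `Σ ≠ ∅`; once `Σ = ∅`, every `b ∈ N` lies in `ℝ x₀`, so `dim Ñ = 1`.
-/

theorem exists_pos_add_smul_mem {E : Type*} [SeminormedAddCommGroup E] [NormedSpace ℝ E]
    {N : Submodule ℝ E} {C : Set E} {x₀ : E} {ε : ℝ} (hε : 0 < ε)
    (hball : ∀ y ∈ N, ‖y - x₀‖ < ε → y ∈ C) (hx₀ : x₀ ∈ N) {v : E} (hv : v ∈ N) :
    ∃ δ : ℝ, 0 < δ ∧ x₀ + δ • v ∈ C := by
  refine ⟨ε / (‖v‖ + 1), by positivity, hball _ (N.add_mem hx₀ (N.smul_mem _ hv)) ?_⟩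
  rw [add_sub_cancel_left, norm_smul, Real.norm_of_nonneg (by positivity), div_mul_eq_mul_div,
    div_lt_iff₀ (by positivity)]
  nlinarith [norm_nonneg v]

theorem exists_sub_smul_nonneg_eq_zero_of_pos {ι : Type*} [Fintype ι] {a b : ι → ℝ}
    (ha : 0 ≤ a) (hb : ∃ k, 0 < b k) :
    ∃ (t : ℝ) (j : ι), 0 < b j ∧ 0 ≤ a - t • b ∧ (a - t • b) j = 0 := by
  classical
  obtain ⟨j, hj, hmin⟩ := (Finset.univ.filter (0 < b ·)).exists_min_image (fun k => a k / b k)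
    (by simpa [Finset.filter_nonempty_iff] using hb)
  rw [Finset.mem_filter] at hj
  refine ⟨a j / b j, j, hj.2, fun k => ?_, by simp [div_mul_cancel₀ _ hj.2.ne']⟩
  have ht : 0 ≤ a j / b j := div_nonneg (ha j) hj.2.le
  simp only [Pi.zero_apply, Pi.sub_apply, Pi.smul_apply, smul_eq_mul, sub_nonneg]
  rcases lt_or_ge 0 (b k) with hk | hk
  · exact (le_div_iff₀ hk).mp (hmin k (by simp [hk]))
  · exact (mul_nonpos_of_nonneg_of_nonpos ht hk).trans (ha k)

theorem exists_sub_smul_nonneg_eq_zero {ι : Type*} [Fintype ι] {a b : ι → ℝ}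
    (ha : 0 ≤ a) (hb : b ≠ 0) :
    ∃ (t : ℝ) (j : ι), b j ≠ 0 ∧ 0 ≤ a - t • b ∧ (a - t • b) j = 0 := by
  obtain ⟨k, hk⟩ := Function.ne_iff.mp hb
  rcases hk.lt_or_gt with hk | hk
  · obtain ⟨t, j, hj, h⟩ := exists_sub_smul_nonneg_eq_zero_of_pos (b := -b) ha ⟨k, by simpa⟩
    exact ⟨-t, j, by simpa using hj.ne', by simpa using h⟩
  · obtain ⟨t, j, hj, h⟩ := exists_sub_smul_nonneg_eq_zero_of_pos ha ⟨k, hk⟩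
    exact ⟨t, j, hj.ne', h⟩

theorem finrank_eq_one_of_le_span_singleton {K V : Type*} [DivisionRing K] [AddCommGroup V]
    [Module K V] {p : Submodule K V} {x : V} (hp : p ≤ K ∙ x) (hp0 : p ≠ ⊥) :
    Module.finrank K p = 1 := by
  have : Module.Finite K p := Module.Finite.of_injective _ (Submodule.inclusion_injective hp)
  have hx : x ≠ 0 := by rintro rfl; simp_all
  have := Submodule.finrank_mono hp
  rw [finrank_span_singleton hx] at this
  have := Submodule.finrank_eq_zero.not.mpr hp0
  omega

def quadrant (n : ℕ) (W : Type*) : Set ((Fin n → ℝ) × W) := {p | ∀ i, 0 ≤ p.1 i}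

/-- The index set `Σ = ⋃ {σ_a : a ∈ (C ∩ N) ∖ {0}}`. -/
def zeroIndices {n : ℕ} {W : Type*} [AddCommGroup W] [Module ℝ W]
    (N : Submodule ℝ ((Fin n → ℝ) × W)) : Set (Fin n) :=
  {i | ∃ a : (Fin n → ℝ) × W, a ∈ quadrant n W ∧ a ∈ N ∧ a ≠ 0 ∧ a.1 i = 0}

section GoodPosition

variable {n : ℕ} {W : Type*} [NormedAddCommGroup W] [NormedSpace ℝ W]
  {N : Submodule ℝ ((Fin n → ℝ) × W)}

theorem fst_apply_eq_zero_of_mem_zeroIndices {Nperp : Submodule ℝ ((Fin n → ℝ) × W)} {c : ℝ}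
    (hc : 0 < c)
    (hgood : ∀ v ∈ N, ∀ m ∈ Nperp, ‖m‖ ≤ c * ‖v‖ → (v + m ∈ quadrant n W ↔ v ∈ quadrant n W))
    {i : Fin n} (hi : i ∈ zeroIndices N) {m : (Fin n → ℝ) × W} (hm : m ∈ Nperp) :
    m.1 i = 0 := by
  obtain ⟨a, haC, haN, ha0, hai⟩ := hi
  set r := c * ‖a‖ / (‖m‖ + 1)
  have hr : 0 < r := by have := norm_pos_iff.mpr ha0; positivity
  have hsmall : ∀ s : ℝ, |s| = r → 0 ≤ s * m.1 i := fun s hs => by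
    have hnorm : ‖s • m‖ ≤ c * ‖a‖ := by
      rw [norm_smul, Real.norm_eq_abs, hs, div_mul_eq_mul_div, div_le_iff₀ (by positivity)]
      nlinarith [norm_nonneg m, norm_nonneg a]
    simpa [hai] using (hgood a haN _ (Nperp.smul_mem s hm) hnorm).mpr haC i
  have h₁ := hsmall r (abs_of_pos hr)
  have h₂ := hsmall (-r) (by rw [abs_neg, abs_of_pos hr])
  exact (mul_eq_zero.mp (by linarith)).resolve_left hr.ne'

theorem fst_apply_pos_of_ball_subset {Nperp : Submodule ℝ ((Fin n → ℝ) × W)}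
    (hsup : N ⊔ Nperp = ⊤) {x₀ : (Fin n → ℝ) × W} (hx₀ : x₀ ∈ N) {ε : ℝ} (hε : 0 < ε)
    (hball : ∀ y ∈ N, ‖y - x₀‖ < ε → y ∈ quadrant n W) {i : Fin n}
    (hi : ∀ m ∈ Nperp, m.1 i = 0) : 0 < x₀.1 i := by
  have hei : ((Pi.single i 1, 0) : (Fin n → ℝ) × W) ∈ N ⊔ Nperp := hsup ▸ Submodule.mem_top
  obtain ⟨u, hu, m, hm, hum⟩ := Submodule.mem_sup.mp hei
  have hui : u.1 i = 1 := by simpa [hi m hm] using congrArg (fun p => p.1 i) hum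
  obtain ⟨δ, hδ, hC⟩ := exists_pos_add_smul_mem hε hball hx₀ (N.neg_mem hu)
  have := hC i
  simp only [Prod.fst_add, Prod.smul_fst, Prod.fst_neg, Pi.add_apply, Pi.smul_apply,
    Pi.neg_apply, hui, smul_eq_mul] at this
  linarith

theorem ne_zero_of_ball_subset {x₀ : (Fin n → ℝ) × W} {ε : ℝ} (hε : 0 < ε)
    (hball : ∀ y ∈ N, ‖y - x₀‖ < ε → y ∈ quadrant n W) {x : (Fin n → ℝ) × W} (hx : x ∈ N)
    (hx1 : x.1 ≠ 0) : x₀ ≠ 0 := by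
  rintro rfl
  obtain ⟨δ, hδ, h⟩ := exists_pos_add_smul_mem hε hball N.zero_mem hx
  obtain ⟨δ', hδ', h'⟩ := exists_pos_add_smul_mem hε hball N.zero_mem (N.neg_mem hx)
  refine hx1 (funext fun i => le_antisymm ?_ ?_)
  · exact nonpos_of_mul_nonpos_right (by simpa using h' i) hδ'
  · exact nonneg_of_mul_nonneg_right (by simpa using h i) hδ

theorem exists_eq_smul_or_mem_zeroIndices {x₀ b : (Fin n → ℝ) × W} (hx₀ : x₀ ∈ N)
    (hx₀C : x₀ ∈ quadrant n W) (hb : b ∈ N) (hb1 : b.1 ≠ 0) :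
    (∃ t : ℝ, x₀ = t • b) ∨ ∃ j ∈ zeroIndices N, b.1 j ≠ 0 := by
  obtain ⟨t, j, hbj, hnonneg, hzero⟩ := exists_sub_smul_nonneg_eq_zero (a := x₀.1) hx₀C hb1
  by_cases h : x₀ - t • b = 0
  · exact Or.inl ⟨t, sub_eq_zero.mp h⟩
  · exact Or.inr ⟨j, ⟨x₀ - t • b, hnonneg, N.sub_mem hx₀ (N.smul_mem t hb), h, hzero⟩, hbj⟩

theorem zeroIndices_eq_empty {x₀ x : (Fin n → ℝ) × W} (hx₀ : x₀ ∈ N) (hx₀C : x₀ ∈ quadrant n W)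
    (hpos : ∀ i ∈ zeroIndices N, 0 < x₀.1 i) (hx : x ∈ N) (hx1 : x.1 ≠ 0)
    (hxS : ∀ i ∈ zeroIndices N, x.1 i = 0) : zeroIndices N = ∅ := by
  refine Set.eq_empty_iff_forall_notMem.mpr fun i hi => ?_
  rcases exists_eq_smul_or_mem_zeroIndices hx₀ hx₀C hx hx1 with ⟨t, rfl⟩ | ⟨j, hj, hxj⟩
  · simpa [hxS i hi] using hpos i hi
  · exact hxj (hxS j hj)

theorem le_span_singleton_of_zeroIndices_eq_empty {x₀ : (Fin n → ℝ) × W} (hx₀ : x₀ ∈ N)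
    (hx₀C : x₀ ∈ quadrant n W) (hx₀0 : x₀ ≠ 0) (hS : zeroIndices N = ∅)
    (hfst : ∀ v ∈ N, v ≠ 0 → v.1 ≠ 0) : N ≤ ℝ ∙ x₀ := by
  intro v hv
  rcases eq_or_ne v 0 with rfl | hv0
  · exact Submodule.zero_mem _
  rcases exists_eq_smul_or_mem_zeroIndices hx₀ hx₀C hv (hfst v hv hv0) with ⟨t, ht⟩ | ⟨j, hj, -⟩
  · have ht0 : t ≠ 0 := by rintro rfl; exact hx₀0 (by simpa using ht)
    exact Submodule.mem_span_singleton.mpr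
      ⟨t⁻¹, by rw [ht, smul_smul, inv_mul_cancel₀ ht0, one_smul]⟩
  · simp [hS] at hj

theorem fst_ne_zero_of_inf_eq_bot {Ntilde : Submodule ℝ ((Fin n → ℝ) × W)}
    (hdisj : Ntilde ⊓ (N ⊓ Submodule.prod ⊥ ⊤) = ⊥) {x : (Fin n → ℝ) × W} (hx : x ∈ Ntilde)
    (hxN : x ∈ N) (hx0 : x ≠ 0) (hxS : ∀ i ∈ zeroIndices N, x.1 i = 0)
    {v : (Fin n → ℝ) × W} (hv : v ∈ N) (hv0 : v ≠ 0) : v.1 ≠ 0 := by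
  intro hv1
  have hx1 : x.1 = 0 := funext fun i => hxS i ⟨v, fun k => by simp [hv1], hv, hv0, by simp [hv1]⟩
  have hxW : x ∈ Ntilde ⊓ (N ⊓ Submodule.prod ⊥ ⊤) :=
    ⟨hx, hxN, Submodule.mem_prod.mpr ⟨hx1, trivial⟩⟩
  exact hx0 (by simpa [hdisj] using hxW)

end GoodPosition

theorem complement_position_dichotomy_general
    (n : ℕ) (W : Type*) [NormedAddCommGroup W] [NormedSpace ℝ W]
    (C : Set ((Fin n → ℝ) × W)) (hC : C = {p : (Fin n → ℝ) × W | ∀ i : Fin n, 0 ≤ p.1 i})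
    (W₀ : Submodule ℝ ((Fin n → ℝ) × W))
    (hW₀ : W₀ = Submodule.prod (⊥ : Submodule ℝ (Fin n → ℝ)) (⊤ : Submodule ℝ W))
    (N Nperp Ntilde : Submodule ℝ ((Fin n → ℝ) × W))
    -- N in good position to C with good complement N⊥ and constant c
    (hint : ∃ x, x ∈ N ∧ x ∈ C ∧ ∃ ε > 0, ∀ y ∈ N, ‖y - x‖ < ε → y ∈ C)
    (hcompl : IsCompl N Nperp)
    (c : ℝ) (hc : 0 < c)
    (hgood : ∀ v ∈ N, ∀ m ∈ Nperp, ‖m‖ ≤ c * ‖v‖ → ((v + m ∈ C) ↔ v ∈ C))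
    -- Ñ is a linear complement of N ∩ W₀ in N
    (hNt : Ntilde ≤ N)
    (hNtdisj : Ntilde ⊓ (N ⊓ W₀) = ⊥)
    -- Σ is the union of the σ_a over nonzero a ∈ C ∩ N
    (S : Set (Fin n))
    (hS : S = {i : Fin n | ∃ a : (Fin n → ℝ) × W, a ∈ C ∧ a ∈ N ∧ a ≠ 0 ∧ a.1 i = 0}) :
    (∀ x ∈ Ntilde, (∀ i ∈ S, x.1 i = 0) → x = 0) ∨
    ((∀ x ∈ Ntilde, ∀ i ∈ S, x.1 i = 0) ∧ Module.finrank ℝ Ntilde = 1 ∧ S = ∅) := by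
  subst hC hW₀
  obtain rfl : S = zeroIndices N := hS
  refine or_iff_not_imp_left.mpr fun h => ?_
  push Not at h
  obtain ⟨x, hx, hxS, hx0⟩ := h
  obtain ⟨x₀, hx₀, hx₀C, ε, hε, hball⟩ := hint
  have hfst : ∀ v ∈ N, v ≠ 0 → v.1 ≠ 0 := fun v hv hv0 =>
    fst_ne_zero_of_inf_eq_bot hNtdisj hx (hNt hx) hx0 hxS hv hv0
  have hpos : ∀ i ∈ zeroIndices N, 0 < x₀.1 i := fun i hi =>
    fst_apply_pos_of_ball_subset hcompl.sup_eq_top hx₀ hε hball fun m hm =>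
      fst_apply_eq_zero_of_mem_zeroIndices hc hgood hi hm
  have hS := zeroIndices_eq_empty hx₀ hx₀C hpos (hNt hx) (hfst x (hNt hx) hx0) hxS
  have hx₀0 := ne_zero_of_ball_subset hε hball (hNt hx) (hfst x (hNt hx) hx0)
  have hspan := le_span_singleton_of_zeroIndices_eq_empty hx₀ hx₀C hx₀0 hS hfst
  refine ⟨by simp [hS], ?_, hS⟩
  exact finrank_eq_one_of_le_span_singleton (hNt.trans hspan)
    ((Submodule.ne_bot_iff _).mpr ⟨x, hx, hx0⟩)

/-- Lemma 5.10: for `N` in good position to `C = [0,∞)^n × W`, a linear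
complement `Ñ` of `N ∩ ({0} × W)` in `N`, and `Σ = ⋃ {σ_a : a ∈ (C ∩ N)∖{0}}`, either
`Ñ ∩ (ℝ^{Σᶜ} ⊕ W) = {0}`, or `Ñ ⊆ ℝ^{Σᶜ} ⊕ W`; in the second case `dim Ñ = 1` and
`Σ = ∅`. -/
theorem complement_position_dichotomy
    (n : ℕ) (W : Type*) [NormedAddCommGroup W] [NormedSpace ℝ W]
    (C : Set ((Fin n → ℝ) × W)) (hC : C = {p : (Fin n → ℝ) × W | ∀ i : Fin n, 0 ≤ p.1 i})
    (W₀ : Submodule ℝ ((Fin n → ℝ) × W))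
    (hW₀ : W₀ = Submodule.prod (⊥ : Submodule ℝ (Fin n → ℝ)) (⊤ : Submodule ℝ W))
    (N Nperp Ntilde : Submodule ℝ ((Fin n → ℝ) × W)) [FiniteDimensional ℝ N]
    -- N in good position to C with good complement N⊥ and constant c
    (hint : ∃ x, x ∈ N ∧ x ∈ C ∧ ∃ ε > 0, ∀ y ∈ N, ‖y - x‖ < ε → y ∈ C)
    (hclosed : IsClosed (Nperp : Set ((Fin n → ℝ) × W)))
    (hcompl : IsCompl N Nperp)
    (c : ℝ) (hc : 0 < c)
    (hgood : ∀ v ∈ N, ∀ m ∈ Nperp, ‖m‖ ≤ c * ‖v‖ → ((v + m ∈ C) ↔ v ∈ C))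
    -- Ñ is a linear complement of N ∩ W₀ in N
    (hNt : Ntilde ≤ N)
    (hNtdisj : Ntilde ⊓ (N ⊓ W₀) = ⊥)
    (hNtsup : Ntilde ⊔ (N ⊓ W₀) = N)
    -- Σ is the union of the σ_a over nonzero a ∈ C ∩ N
    (S : Set (Fin n))
    (hS : S = {i : Fin n | ∃ a : (Fin n → ℝ) × W, a ∈ C ∧ a ∈ N ∧ a ≠ 0 ∧ a.1 i = 0}) :
    (∀ x ∈ Ntilde, (∀ i ∈ S, x.1 i = 0) → x = 0) ∨
    ((∀ x ∈ Ntilde, ∀ i ∈ S, x.1 i = 0) ∧ Module.finrank ℝ Ntilde = 1 ∧ S = ∅) :=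
  complement_position_dichotomy_general n W C hC W₀ hW₀ N Nperp Ntilde hint hcompl c hc hgood hNt
    hNtdisj S hS
end

section
/- Let E and F be real Banach spaces, U an open neighborhood of 0 in E, and f : U → F a map of class C¹ with f(0) = 0 whose derivative T := Df(0) is a Fredholm operator: K := ker T is finite-dimensional with a closed complement X in E, and Y := range T is closed with a finite-dimensional complement C in F. Let P : F → F denote the projection onto Y along C, and let (T|X)⁻¹ : Y → X be the inverse of the isomorphism T|X : X → Y. Define B(k,y) := P f(k + (T|X)⁻¹ y) − y for (k,y) ∈ K × Y near (0,0). Then B(0,0) = 0, DB(0,0) = 0, and for every ε > 0 there exists δ > 0 such that ‖B(k,y) − B(k,y′)‖ ≤ ε‖y − y′‖ whenever k ∈ K, y, y′ ∈ Y satisfy ‖k‖ < δ, ‖y‖ < δ, ‖y′‖ < δ. (Classical contraction-germ normal form of a nonlinear Fredholm map, as established in the introduction.) -/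
/-!
A `C¹` map is strictly differentiable: `f a - f b - T (a - b) = o(‖a - b‖)` as `a, b → 0`.
Hence `B` is strictly differentiable at `0` with derivative `(k, y) ↦ P (T k + T (Tinv y)) - y`,
which vanishes on `K × Y`. On a subspace where the derivative vanishes, a strictly
differentiable map has derivative `0` within it and is `ε`-Lipschitz near the base point.
-/

open Filter Topology

section StrictDerivOnKernel

variable {𝕜 G H : Type*} [NontriviallyNormedField 𝕜]
  [NormedAddCommGroup G] [NormedSpace 𝕜 G] [NormedAddCommGroup H] [NormedSpace 𝕜 H]
  {B : G → H} {L : G →L[𝕜] H} {x : G} {S : Submodule 𝕜 G}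

theorem HasStrictFDerivAt.isLittleO_sub_of_le_ker (hB : HasStrictFDerivAt B L x)
    (hS : S ≤ LinearMap.ker (L : G →ₗ[𝕜] H)) :
    (fun p : G × G => B p.1 - B p.2) =o[𝓝[(S : Set G) ×ˢ S] (x, x)] fun p => p.1 - p.2 := by
  refine (hB.isLittleO.mono nhdsWithin_le_nhds).congr' ?_ EventuallyEq.rfl
  filter_upwards [self_mem_nhdsWithin] with p ⟨hp₁, hp₂⟩
  rw [show L (p.1 - p.2) = 0 from hS (S.sub_mem hp₁ hp₂), sub_zero]

theorem HasStrictFDerivAt.hasFDerivWithinAt_zero_of_le_ker (hB : HasStrictFDerivAt B L x)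
    (hS : S ≤ LinearMap.ker (L : G →ₗ[𝕜] H)) (hx : x ∈ S) : HasFDerivWithinAt B (0 : G →L[𝕜] H) S x := by
  refine hasFDerivWithinAt_iff_isLittleO.mpr <|
    (hasFDerivWithinAt_iff_isLittleO.mp hB.hasFDerivAt.hasFDerivWithinAt).congr' ?_ EventuallyEq.rfl
  filter_upwards [self_mem_nhdsWithin] with p hp
  rw [show L (p - x) = 0 from hS (S.sub_mem hp hx), zero_apply]

theorem HasStrictFDerivAt.exists_norm_sub_le_of_le_ker (hB : HasStrictFDerivAt B L x)
    (hS : S ≤ LinearMap.ker (L : G →ₗ[𝕜] H)) {ε : ℝ} (hε : 0 < ε) :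
    ∃ δ > 0, ∀ p ∈ S, ∀ q ∈ S, ‖p - x‖ < δ → ‖q - x‖ < δ → ‖B p - B q‖ ≤ ε * ‖p - q‖ := by
  obtain ⟨δ, hδ, hball⟩ :=
    Metric.mem_nhdsWithin_iff.mp ((hB.isLittleO_sub_of_le_ker hS).bound hε)
  refine ⟨δ, hδ, fun p hp q hq hpδ hqδ => hball (a := (p, q)) ⟨?_, hp, hq⟩⟩
  rw [Metric.mem_ball, Prod.dist_eq, max_lt_iff, dist_eq_norm, dist_eq_norm]
  exact ⟨hpδ, hqδ⟩

end StrictDerivOnKernel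

theorem fredholm_contraction_normal_form_general
    (E F : Type*) [NormedAddCommGroup E] [NormedSpace ℝ E]
    [NormedAddCommGroup F] [NormedSpace ℝ F]
    (U : Set E) (hU : IsOpen U) (h0U : (0 : E) ∈ U)
    (f : E → F) (hf : ContDiffOn ℝ 1 f U) (hf0 : f 0 = 0)
    -- T = Df(0)
    (T : E →L[ℝ] F) (hT : HasFDerivAt f T 0)
    -- P is the projection onto Y = range T along C
    (P : F →L[ℝ] F) (hPY : ∀ y ∈ LinearMap.range (T : E →ₗ[ℝ] F), P y = y)
    -- Tinv realizes (T|X)⁻¹ : Y → X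
    (Tinv : F →L[ℝ] E)
    (hTinvT : ∀ y ∈ LinearMap.range (T : E →ₗ[ℝ] F), T (Tinv y) = y)
    -- B(k,y) = P f(k + (T|X)⁻¹ y) − y
    (B : E × F → F) (hB : ∀ p : E × F, B p = P (f (p.1 + Tinv p.2)) - p.2) :
    B (0, 0) = 0 ∧
    HasFDerivWithinAt B (0 : E × F →L[ℝ] F)
      (((LinearMap.ker (T : E →ₗ[ℝ] F) : Submodule ℝ E) : Set E) ×ˢ
        ((LinearMap.range (T : E →ₗ[ℝ] F) : Submodule ℝ F) : Set F)) (0, 0) ∧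
    ∀ ε > 0, ∃ δ > 0, ∀ k ∈ LinearMap.ker (T : E →ₗ[ℝ] F), ∀ y ∈ LinearMap.range (T : E →ₗ[ℝ] F),
      ∀ y' ∈ LinearMap.range (T : E →ₗ[ℝ] F), ‖k‖ < δ → ‖y‖ < δ → ‖y'‖ < δ →
        ‖B (k, y) - B (k, y')‖ ≤ ε * ‖y - y'‖ := by
  set K := LinearMap.ker (T : E →ₗ[ℝ] F)
  set Y := LinearMap.range (T : E →ₗ[ℝ] F)
  set J : E × F →L[ℝ] E := .fst ℝ E F + Tinv.comp (.snd ℝ E F)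
  have hfT : HasStrictFDerivAt f T 0 :=
    hT.fderiv ▸ (hf.contDiffAt (hU.mem_nhds h0U)).hasStrictFDerivAt one_ne_zero
  have hBJ : B = fun p => P (f (J p)) - p.2 := funext hB
  have hBT : HasStrictFDerivAt B (P.comp (T.comp J) - .snd ℝ E F) 0 := by
    rw [hBJ]
    exact (P.hasStrictFDerivAt.comp 0 <| (by simpa [J] using hfT : HasStrictFDerivAt f T (J 0)).comp
      0 J.hasStrictFDerivAt).sub (ContinuousLinearMap.snd ℝ E F).hasStrictFDerivAt
  have hKY : K.prod Y ≤ LinearMap.ker (P.comp (T.comp J) - .snd ℝ E F : E × F →ₗ[ℝ] F) := by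
    rintro ⟨k, y⟩ ⟨hk : T k = 0, hy : y ∈ Y⟩
    simp [J, hk, hTinvT y hy, hPY y hy]
  refine ⟨by simp [hB, hf0], ?_, fun ε hε => ?_⟩
  · rw [← Submodule.prod_coe]
    exact hBT.hasFDerivWithinAt_zero_of_le_ker hKY (K.prod Y).zero_mem
  · obtain ⟨δ, hδ, hB_lip⟩ := hBT.exists_norm_sub_le_of_le_ker hKY hε
    refine ⟨δ, hδ, fun k hk y hy y' hy' hkδ hyδ hy'δ => ?_⟩
    have h := hB_lip (k, y) ⟨hk, hy⟩ (k, y') ⟨hk, hy'⟩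
      (by simpa [Prod.norm_def] using ⟨hkδ, hyδ⟩) (by simpa [Prod.norm_def] using ⟨hkδ, hy'δ⟩)
    simpa [Prod.norm_def] using h

/-- classical contraction-germ normal form of a nonlinear Fredholm map, as
established in the introduction. -/
theorem fredholm_contraction_normal_form
    (E F : Type*) [NormedAddCommGroup E] [NormedSpace ℝ E] [CompleteSpace E]
    [NormedAddCommGroup F] [NormedSpace ℝ F] [CompleteSpace F]
    (U : Set E) (hU : IsOpen U) (h0U : (0 : E) ∈ U)
    (f : E → F) (hf : ContDiffOn ℝ 1 f U) (hf0 : f 0 = 0)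
    -- T = Df(0)
    (T : E →L[ℝ] F) (hT : HasFDerivAt f T 0)
    -- T is Fredholm: finite-dimensional kernel with closed complement X,
    -- closed range with finite-dimensional complement C
    [FiniteDimensional ℝ (LinearMap.ker (T : E →ₗ[ℝ] F))]
    (X : Submodule ℝ E) (hXclosed : IsClosed (X : Set E))
    (hX : IsCompl (LinearMap.ker (T : E →ₗ[ℝ] F)) X)
    (hYclosed : IsClosed ((LinearMap.range (T : E →ₗ[ℝ] F) : Submodule ℝ F) : Set F))
    (Cc : Submodule ℝ F) [FiniteDimensional ℝ Cc]
    (hCc : IsCompl (LinearMap.range (T : E →ₗ[ℝ] F)) Cc)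
    -- P is the projection onto Y = range T along C
    (P : F →L[ℝ] F) (hPY : ∀ y ∈ LinearMap.range (T : E →ₗ[ℝ] F), P y = y) (hPC : ∀ z ∈ Cc, P z = 0)
    -- Tinv realizes (T|X)⁻¹ : Y → X
    (Tinv : F →L[ℝ] E)
    (hTinvX : ∀ y ∈ LinearMap.range (T : E →ₗ[ℝ] F), Tinv y ∈ X)
    (hTinvT : ∀ y ∈ LinearMap.range (T : E →ₗ[ℝ] F), T (Tinv y) = y)
    -- B(k,y) = P f(k + (T|X)⁻¹ y) − y
    (B : E × F → F) (hB : ∀ p : E × F, B p = P (f (p.1 + Tinv p.2)) - p.2) :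
    B (0, 0) = 0 ∧
    HasFDerivWithinAt B (0 : E × F →L[ℝ] F)
      (((LinearMap.ker (T : E →ₗ[ℝ] F) : Submodule ℝ E) : Set E) ×ˢ
        ((LinearMap.range (T : E →ₗ[ℝ] F) : Submodule ℝ F) : Set F)) (0, 0) ∧
    ∀ ε > 0, ∃ δ > 0, ∀ k ∈ LinearMap.ker (T : E →ₗ[ℝ] F), ∀ y ∈ LinearMap.range (T : E →ₗ[ℝ] F),
      ∀ y' ∈ LinearMap.range (T : E →ₗ[ℝ] F), ‖k‖ < δ → ‖y‖ < δ → ‖y'‖ < δ →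
        ‖B (k, y) - B (k, y')‖ ≤ ε * ‖y - y'‖ :=
  fredholm_contraction_normal_form_general E F U hU h0U f hf hf0 T hT P hPY Tinv hTinvT B hB
end

section
/- Let W₀ be a real Banach space, W₁ a reflexive real Banach space, and ι : W₁ → W₀ an injective compact continuous linear map. Let A ⊆ ℝ^n be compact, and let B : A × W₀ → W₀ be continuous such that for some constant 0 < ρ < 1 one has ‖B(a,w) − B(a,w′)‖ ≤ ρ‖w − w′‖ for all a ∈ A and w, w′ ∈ W₀. Suppose (a_k, w_k) is a sequence in A × W₀ such that for every k there exists u_k ∈ W₁ with w_k − B(a_k, w_k) = ι(u_k) and sup_k ‖u_k‖_{W₁} < ∞. Then (a_k, w_k) possesses a subsequence converging in ℝ^n × W₀ to a point (a, w) ∈ A × W₀ with w − B(a, w) ∈ ι(W₁). (Analytic core of the Local Compactness Theorem, Theorem 4.5.) -/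
/-!
Pass to a subsequence along which `a k → a∞` (compactness of `A`) and `ι (u k) → v`
(compactness of `ι`). Since `W₁` is reflexive, bounded sets of `W₁` have weakly compact
closure, so the norm closure of `ι '' closedBall 0 M` lies in the weakly compact set
`ι '' (weak closure of the ball)`; hence `v = ι u∞`. Let `w∞` be the fixed point of the
contraction `x ↦ B a∞ x + v`. Each `w k` is the fixed point of `x ↦ B (a k) x + ι (u k)`, a
contraction with the same constant `ρ`, and the a priori estimate
`dist (w k) w∞ ≤ dist w∞ (B (a k) w∞ + ι (u k)) / (1 - ρ)` together with continuity of `B`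
gives `w k → w∞`.
-/

open Filter Topology Bornology Set NormedSpace

theorem closure_image_subset_range_of_surjective_inclusionInDoubleDual
    {𝕜 X F : Type*} [RCLike 𝕜] [NormedAddCommGroup X] [NormedSpace 𝕜 X]
    [NormedAddCommGroup F] [NormedSpace 𝕜 F]
    (hrefl : Function.Surjective (inclusionInDoubleDual 𝕜 X)) (T : X →L[𝕜] F) {S : Set X}
    (hS : IsBounded S) : closure (T '' S) ⊆ range T := by
  set S' : Set (WeakSpace 𝕜 X) := toWeakSpace 𝕜 X '' S
  have hS' : IsCompact (closure S') := by
    refine isCompact_closure_of_isBounded 𝕜 X S' ?_ fun Φ _ => ?_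
    · rwa [(toWeakSpace 𝕜 X).injective.preimage_image]
    · obtain ⟨x, hx⟩ := hrefl (WeakDual.toStrongDual Φ)
      exact ⟨toWeakSpace 𝕜 X x, DFunLike.ext _ _ fun f => congr($hx f)⟩
  have hclosed : IsClosed (toWeakSpaceCLM 𝕜 F ⁻¹' (WeakSpace.map T '' closure S')) :=
    (hS'.image (WeakSpace.map T).continuous).isClosed.preimage (toWeakSpaceCLM 𝕜 F).continuous
  calc closure (T '' S)
      ⊆ toWeakSpaceCLM 𝕜 F ⁻¹' (WeakSpace.map T '' closure S') := by
        refine closure_minimal ?_ hclosed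
        rintro _ ⟨x, hx, rfl⟩
        exact ⟨toWeakSpace 𝕜 X x, subset_closure (mem_image_of_mem _ hx), rfl⟩
    _ ⊆ range T := by
        rintro _ ⟨x, -, hx⟩
        exact ⟨x, hx⟩

theorem LipschitzWith.add_const_of_norm_sub_le {E : Type*} [SeminormedAddCommGroup E]
    {f : E → E} {ρ : ℝ} (hf : ∀ x y, ‖f x - f y‖ ≤ ρ * ‖x - y‖) (c : E) :
    LipschitzWith ρ.toNNReal (fun x => f x + c) :=
  LipschitzWith.of_dist_le' fun x y => by
    rw [dist_add_right, dist_eq_norm, dist_eq_norm]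
    exact hf x y

theorem tendsto_of_isFixedPt_of_lipschitzWith {α ι : Type*} [MetricSpace α] {K : NNReal}
    {f : ι → α → α} {y : ι → α} {x : α} {l : Filter ι} (hK : K < 1)
    (hf : ∀ i, LipschitzWith K (f i)) (hy : ∀ i, Function.IsFixedPt (f i) (y i))
    (hx : Tendsto (fun i => f i x) l (𝓝 x)) : Tendsto y l (𝓝 x) := by
  refine tendsto_iff_dist_tendsto_zero.2 <| squeeze_zero (fun _ => dist_nonneg) (fun i => ?_)
    (by simpa using (tendsto_iff_dist_tendsto_zero.1 hx).div_const (1 - (K : ℝ)))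
  rw [dist_comm, dist_comm (f i x)]
  exact ContractingWith.dist_le_of_fixedPoint ⟨hK, hf i⟩ x (hy i)

theorem local_compactness_core_general
    (n : ℕ) (W₀ W₁ : Type*)
    [NormedAddCommGroup W₀] [NormedSpace ℝ W₀] [CompleteSpace W₀]
    [NormedAddCommGroup W₁] [NormedSpace ℝ W₁]
    -- W₁ is reflexive
    (hrefl : Function.Surjective (NormedSpace.inclusionInDoubleDual ℝ W₁))
    -- ι : W₁ → W₀ is an injective compact continuous linear map
    (ι : W₁ →L[ℝ] W₀) (hcpt : IsCompactOperator (⇑ι))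
    (A : Set (Fin n → ℝ)) (hA : IsCompact A)
    (B : (Fin n → ℝ) → W₀ → W₀)
    (hBcont : ContinuousOn (fun p : (Fin n → ℝ) × W₀ => B p.1 p.2) (A ×ˢ Set.univ))
    (ρ : ℝ) (hρ1 : ρ < 1)
    (hcontr : ∀ a ∈ A, ∀ w w' : W₀, ‖B a w - B a w'‖ ≤ ρ * ‖w - w'‖)
    (a : ℕ → Fin n → ℝ) (ha : ∀ k, a k ∈ A) (w : ℕ → W₀) (u : ℕ → W₁)
    (hu : ∀ k, w k - B (a k) (w k) = ι (u k))
    (M : ℝ) (hM : ∀ k, ‖u k‖ ≤ M) :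
    ∃ φ : ℕ → ℕ, StrictMono φ ∧ ∃ (aLim : Fin n → ℝ) (wLim : W₀), aLim ∈ A ∧
      Filter.Tendsto (fun k => (a (φ k), w (φ k))) Filter.atTop (nhds (aLim, wLim)) ∧
      wLim - B aLim wLim ∈ Set.range (⇑ι) := by
  obtain ⟨aLim, haLim, φ₁, hφ₁, ha_tendsto⟩ := hA.tendsto_subseq ha
  have hu_mem : ∀ k, ι (u k) ∈ closure (ι '' Metric.closedBall 0 M) := fun k =>
    subset_closure ⟨u k, mem_closedBall_zero_iff.2 (hM k), rfl⟩
  obtain ⟨v, hv, φ₂, hφ₂, hv_tendsto⟩ :=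
    (hcpt.isCompact_closure_image_closedBall M).tendsto_subseq fun k => hu_mem (φ₁ k)
  obtain ⟨uLim, rfl⟩ := closure_image_subset_range_of_surjective_inclusionInDoubleDual hrefl ι
    Metric.isBounded_closedBall hv
  set φ := φ₁ ∘ φ₂
  replace ha_tendsto : Tendsto (a ∘ φ) atTop (𝓝 aLim) := ha_tendsto.comp hφ₂.tendsto_atTop
  replace hv_tendsto : Tendsto (fun k => ι (u (φ k))) atTop (𝓝 (ι uLim)) := hv_tendsto
  have hK : ρ.toNNReal < 1 := Real.toNNReal_lt_one.2 hρ1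
  have hT : ContractingWith ρ.toNNReal (fun x => B aLim x + ι uLim) :=
    ⟨hK, .add_const_of_norm_sub_le (hcontr aLim haLim) _⟩
  set wLim := hT.fixedPoint
  have hwLim : B aLim wLim + ι uLim = wLim := hT.fixedPoint_isFixedPt
  have hB_tendsto : Tendsto (fun k => B (a (φ k)) wLim) atTop (𝓝 (B aLim wLim)) :=
    (hBcont (aLim, wLim) ⟨haLim, trivial⟩).tendsto.comp <| tendsto_nhdsWithin_iff.2
      ⟨ha_tendsto.prodMk_nhds tendsto_const_nhds, .of_forall fun k => ⟨ha (φ k), trivial⟩⟩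
  have hw_tendsto : Tendsto (w ∘ φ) atTop (𝓝 wLim) := by
    refine tendsto_of_isFixedPt_of_lipschitzWith hK
      (fun k => .add_const_of_norm_sub_le (hcontr (a (φ k)) (ha (φ k))) (ι (u (φ k))))
      (fun k => ?_) (by simpa only [hwLim] using hB_tendsto.add hv_tendsto)
    simp only [Function.IsFixedPt, Function.comp_apply, ← hu, add_sub_cancel]
  exact ⟨φ, hφ₁.comp hφ₂, aLim, wLim, haLim, ha_tendsto.prodMk_nhds hw_tendsto,
    ⟨uLim, eq_sub_of_add_eq' hwLim⟩⟩

/-- analytic core of the Local Compactness Theorem (Theorem 4.5). -/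
theorem local_compactness_core
    (n : ℕ) (W₀ W₁ : Type*)
    [NormedAddCommGroup W₀] [NormedSpace ℝ W₀] [CompleteSpace W₀]
    [NormedAddCommGroup W₁] [NormedSpace ℝ W₁] [CompleteSpace W₁]
    -- W₁ is reflexive
    (hrefl : Function.Surjective (NormedSpace.inclusionInDoubleDual ℝ W₁))
    -- ι : W₁ → W₀ is an injective compact continuous linear map
    (ι : W₁ →L[ℝ] W₀) (hinj : Function.Injective (⇑ι)) (hcpt : IsCompactOperator (⇑ι))
    (A : Set (Fin n → ℝ)) (hA : IsCompact A)
    (B : (Fin n → ℝ) → W₀ → W₀)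
    (hBcont : ContinuousOn (fun p : (Fin n → ℝ) × W₀ => B p.1 p.2) (A ×ˢ Set.univ))
    (ρ : ℝ) (hρ0 : 0 < ρ) (hρ1 : ρ < 1)
    (hcontr : ∀ a ∈ A, ∀ w w' : W₀, ‖B a w - B a w'‖ ≤ ρ * ‖w - w'‖)
    (a : ℕ → Fin n → ℝ) (ha : ∀ k, a k ∈ A) (w : ℕ → W₀) (u : ℕ → W₁)
    (hu : ∀ k, w k - B (a k) (w k) = ι (u k))
    (M : ℝ) (hM : ∀ k, ‖u k‖ ≤ M) :
    ∃ φ : ℕ → ℕ, StrictMono φ ∧ ∃ (aLim : Fin n → ℝ) (wLim : W₀), aLim ∈ A ∧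
      Filter.Tendsto (fun k => (a (φ k), w (φ k))) Filter.atTop (nhds (aLim, wLim)) ∧
      wLim - B aLim wLim ∈ Set.range (⇑ι) :=
  local_compactness_core_general n W₀ W₁ hrefl ι hcpt A hA B hBcont ρ hρ1 hcontr a ha w u hu M hM
end
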